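/- arXiv:1801.08056 — 2 statements merged into one kernel-verified Lean document; each statement's English description precedes it below -/
import Mathlib

section
/- Let P_n = P_n(x,y,z) = Σ_{σ ∈ Q_n} x^{lap(σ)} y^{dasc(σ)} z^{dp(σ)}, a polynomial in ℚ[x,y,z] with P_0 = 1. Then for every n ≥ 0, P_{n+1} = (2n+1)x·P_n + (xy + xz − 2x²)·∂P_n/∂x + x(1−y)·∂P_n/∂y + x(1−z)·∂P_n/∂z. -/
open Finset MvPolynomial

/-- Stirling permutations of order `n`, encoded as functions `Fin (2*n) → Fin (n+1)`
in one-line notation (position `i` holds the letter `σ (i) ∈ {1,…,n}`), such that each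
letter `1,…,n` occurs exactly twice and all entries between the two occurrences of a
letter are larger than that letter. -/
def StirlingSet (n : ℕ) : Finset (Fin (2*n) → Fin (n+1)) :=
  Finset.univ.filter (fun σ =>
    (∀ v : Fin (n+1), (v : ℕ) ≠ 0 →
        (Finset.univ.filter (fun i => σ i = v)).card = 2) ∧
    (∀ i j k : Fin (2*n), i < j → j < k → σ i = σ k → σ i < σ j))

/-- The letter at position `i ∈ {1,…,2n}` of a Stirling permutation, with the
convention that positions outside this range (in particular position `0`) hold `0`. -/
def sval {n : ℕ} (σ : Fin (2*n) → Fin (n+1)) (i : ℕ) : ℕ :=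
  if h : 1 ≤ i ∧ i ≤ 2*n then (σ ⟨i - 1, by omega⟩ : ℕ) else 0

/-- The number of ascent-plateaus: indices `2 ≤ i ≤ 2n-1` with `σ_{i-1} < σ_i = σ_{i+1}`. -/
def apQ {n : ℕ} (σ : Fin (2*n) → Fin (n+1)) : ℕ :=
  ((Finset.Icc 2 (2*n - 1)).filter
    (fun i => sval σ (i-1) < sval σ i ∧ sval σ i = sval σ (i+1))).card

/-- The number of left ascent-plateaus: indices `1 ≤ i ≤ 2n-1` with
`σ_{i-1} < σ_i = σ_{i+1}`, where `σ_0 = 0`. -/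
def lapQ {n : ℕ} (σ : Fin (2*n) → Fin (n+1)) : ℕ :=
  ((Finset.Icc 1 (2*n - 1)).filter
    (fun i => sval σ (i-1) < sval σ i ∧ sval σ i = sval σ (i+1))).card

/-- The number of double ascents: indices `1 ≤ i ≤ 2n-1` with
`σ_{i-1} < σ_i < σ_{i+1}`, where `σ_0 = 0`. -/
def dascQ {n : ℕ} (σ : Fin (2*n) → Fin (n+1)) : ℕ :=
  ((Finset.Icc 1 (2*n - 1)).filter
    (fun i => sval σ (i-1) < sval σ i ∧ sval σ i < sval σ (i+1))).card

/-- The number of descent-plateaus: indices `2 ≤ i ≤ 2n-1` with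
`σ_{i-1} > σ_i = σ_{i+1}`. -/
def dpQ {n : ℕ} (σ : Fin (2*n) → Fin (n+1)) : ℕ :=
  ((Finset.Icc 2 (2*n - 1)).filter
    (fun i => sval σ i < sval σ (i-1) ∧ sval σ i = sval σ (i+1))).card

/-- The number of ascents: indices `1 ≤ i ≤ 2n-1` with `σ_i < σ_{i+1}` or `i = 1`. -/
def ascQ {n : ℕ} (σ : Fin (2*n) → Fin (n+1)) : ℕ :=
  ((Finset.Icc 1 (2*n - 1)).filter
    (fun i => sval σ i < sval σ (i+1) ∨ i = 1)).card

/-- The number of plateaus: indices `1 ≤ i ≤ 2n-1` with `σ_i = σ_{i+1}`. -/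
def platQ {n : ℕ} (σ : Fin (2*n) → Fin (n+1)) : ℕ :=
  ((Finset.Icc 1 (2*n - 1)).filter (fun i => sval σ i = sval σ (i+1))).card

/-- The flag ascent-plateau number: `2·ap(σ)+1` if `σ_1 = σ_2`, and `2·ap(σ)` otherwise. -/
def fapQ {n : ℕ} (σ : Fin (2*n) → Fin (n+1)) : ℕ :=
  if 1 ≤ n ∧ sval σ 1 = sval σ 2 then 2 * apQ σ + 1 else 2 * apQ σ

/-- `P_n(x,y,z) = Σ_{σ ∈ Q_n} x^{lap(σ)} y^{dasc(σ)} z^{dp(σ)}`. -/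
noncomputable def Ppoly (n : ℕ) : MvPolynomial (Fin 3) ℚ :=
  ∑ σ ∈ StirlingSet n, X 0 ^ lapQ σ * X 1 ^ dascQ σ * X 2 ^ dpQ σ


namespace St11

variable {n : ℕ}

lemma sval_le (σ : Fin (2*n) → Fin (n+1)) (i : ℕ) : sval σ i ≤ n := by
  unfold sval; split
  · exact Fin.is_le _
  · exact Nat.zero_le _

lemma sval_zero (σ : Fin (2*n) → Fin (n+1)) {i : ℕ} (h : i = 0 ∨ 2*n < i) :
    sval σ i = 0 := by
  unfold sval; rw [dif_neg]; omega

lemma sval_nonzero_bounds (σ : Fin (2*n) → Fin (n+1)) {i : ℕ} (h : sval σ i ≠ 0) :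
    1 ≤ i ∧ i ≤ 2*n := by
  by_contra hc
  exact h (sval_zero σ (by omega))

lemma sval_eq_val (σ : Fin (2*n) → Fin (n+1)) {i : ℕ} (h1 : 1 ≤ i) (h2 : i ≤ 2*n) :
    sval σ i = (σ ⟨i - 1, by omega⟩ : ℕ) := by
  unfold sval; rw [dif_pos ⟨h1, h2⟩]

lemma sval_fin (σ : Fin (2*n) → Fin (n+1)) (i : Fin (2*n)) :
    sval σ ((i : ℕ)+1) = σ i := by
  rw [sval_eq_val σ (by omega) (by omega)]
  congr 1

lemma sval_ext {f g : Fin (2*n) → Fin (n+1)} (h : ∀ i, sval f i = sval g i) : f = g := by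
  funext i
  have := h ((i : ℕ)+1)
  rw [sval_fin, sval_fin] at this
  exact Fin.ext this

/-- ℕ-level characterization of Stirling permutations. -/
def StirN (m : ℕ) (s : ℕ → ℕ) : Prop :=
  (∀ v, 1 ≤ v → v ≤ m → ((Icc 1 (2*m)).filter (fun i => s i = v)).card = 2) ∧
  (∀ i j k : ℕ, 1 ≤ i → i < j → j < k → k ≤ 2*m → s i = s k → s i < s j)

lemma card_fiber_eq (σ : Fin (2*n) → Fin (n+1)) (v : Fin (n+1)) :
    (Finset.univ.filter (fun i => σ i = v)).card
      = ((Icc 1 (2*n)).filter (fun i => sval σ i = (v : ℕ))).card := by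
  refine Finset.card_bij' (fun a _ => (a : ℕ)+1)
    (fun b hb => ⟨b-1, ?_⟩) ?_ ?_ ?_ ?_
  · simp only [Finset.mem_filter, Finset.mem_Icc] at hb; omega
  · intro a ha
    simp only [Finset.mem_filter, Finset.mem_univ, true_and] at ha
    simp only [Finset.mem_filter, Finset.mem_Icc]
    refine ⟨⟨by omega, by omega⟩, ?_⟩
    rw [sval_fin, ha]
  · intro b hb
    simp only [Finset.mem_filter, Finset.mem_Icc] at hb
    simp only [Finset.mem_filter, Finset.mem_univ, true_and]
    obtain ⟨⟨hb1, hb2⟩, hb3⟩ := hb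
    rw [sval_eq_val σ hb1 hb2] at hb3
    exact Fin.ext hb3
  · intro a ha; exact Fin.ext (by simp)
  · intro b hb
    simp only [Finset.mem_filter, Finset.mem_Icc] at hb
    show b - 1 + 1 = b
    omega

lemma mem_stirling_iff (σ : Fin (2*n) → Fin (n+1)) :
    σ ∈ StirlingSet n ↔ StirN n (sval σ) := by
  rw [StirlingSet, Finset.mem_filter]
  simp only [Finset.mem_univ, true_and]
  constructor
  · rintro ⟨h1, h2⟩
    constructor
    · intro v hv1 hv2
      have hv' : ((⟨v, by omega⟩ : Fin (n+1)) : ℕ) ≠ 0 := by simpa using by omega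
      have := h1 ⟨v, by omega⟩ hv'
      rw [card_fiber_eq] at this
      simpa using this
    · intro i j k hi hij hjk hk he
      have hik := sval_eq_val σ (i := i) (by omega) (by omega)
      have hkk := sval_eq_val σ (i := k) (by omega) (by omega)
      have hjj := sval_eq_val σ (i := j) (by omega) (by omega)
      rw [hik, hkk] at he
      have he' : σ ⟨i-1, by omega⟩ = σ ⟨k-1, by omega⟩ := Fin.ext he
      have := h2 ⟨i-1, by omega⟩ ⟨j-1, by omega⟩ ⟨k-1, by omega⟩
        (Fin.mk_lt_mk.mpr (by omega)) (Fin.mk_lt_mk.mpr (by omega)) he'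
      rw [hik, hjj]
      exact this
  · rintro ⟨h1, h2⟩
    constructor
    · intro v hv
      rw [card_fiber_eq]
      exact h1 (v : ℕ) (by omega) (Fin.is_le v)
    · intro i j k hij hjk he
      have h2' := h2 ((i:ℕ)+1) ((j:ℕ)+1) ((k:ℕ)+1) (by omega)
        (by simpa [Nat.add_lt_add_iff_right] using hij)
        (by simpa [Nat.add_lt_add_iff_right] using hjk)
        (by omega) (by rw [sval_fin, sval_fin, he])
      rw [sval_fin, sval_fin] at h2'
      exact h2'


variable {m : ℕ} {s : ℕ → ℕ}

lemma s_mem (hs : StirN m s) {i : ℕ} (h1 : 1 ≤ i) (h2 : i ≤ 2*m) :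
    1 ≤ s i ∧ s i ≤ m := by
  classical
  set T := (Icc 1 m).biUnion (fun v => (Icc 1 (2*m)).filter (fun i => s i = v)) with hT
  have hsub : T ⊆ Icc 1 (2*m) := by
    intro x hx
    rw [hT, Finset.mem_biUnion] at hx
    obtain ⟨v, _, hx⟩ := hx
    exact (Finset.mem_filter.mp hx).1
  have hcard : T.card = 2*m := by
    rw [hT, Finset.card_biUnion]
    · rw [Finset.sum_congr rfl (fun v hv => hs.1 v (Finset.mem_Icc.mp hv).1 (Finset.mem_Icc.mp hv).2)]
      simp [Nat.card_Icc]
      ring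
    · intro v hv w hw hvw
      simp only [Finset.disjoint_filter]
      intro x _ hxv hxw
      exact hvw (hxv ▸ hxw ▸ rfl)
  have hTeq : T = Icc 1 (2*m) := by
    apply Finset.eq_of_subset_of_card_le hsub
    rw [hcard, Nat.card_Icc]
    omega
  have : i ∈ T := by rw [hTeq]; exact Finset.mem_Icc.mpr ⟨h1, h2⟩
  rw [hT, Finset.mem_biUnion] at this
  obtain ⟨v, hv, hi⟩ := this
  rw [Finset.mem_Icc] at hv
  rw [Finset.mem_filter] at hi
  omega

lemma pair_eq (hs : StirN m s) {v : ℕ} (h1 : 1 ≤ v) (h2 : v ≤ m) :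
    ∃ a b, a < b ∧ (Icc 1 (2*m)).filter (fun i => s i = v) = {a, b} := by
  classical
  obtain ⟨a, b, hab, he⟩ := Finset.card_eq_two.mp (hs.1 v h1 h2)
  rcases lt_or_gt_of_ne hab with h | h
  · exact ⟨a, b, h, he⟩
  · exact ⟨b, a, h, by rw [he, Finset.pair_comm]⟩

lemma no_triple (hs : StirN m s) (hz : ∀ i, s i ≠ 0 → 1 ≤ i ∧ i ≤ 2*m)
    (hle : ∀ i, s i ≤ m) {i j k : ℕ} (hij : i < j) (hjk : j < k)
    (h0 : s i ≠ 0) (e1 : s i = s j) (e2 : s j = s k) : False := by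
  classical
  obtain ⟨a, b, _, he⟩ := pair_eq hs (v := s i) (by omega) (hle i)
  have hi : i ∈ (Icc 1 (2*m)).filter (fun x => s x = s i) := by
    simp only [Finset.mem_filter, Finset.mem_Icc]
    exact ⟨⟨(hz i h0).1, (hz i h0).2⟩, trivial⟩
  have hj : j ∈ (Icc 1 (2*m)).filter (fun x => s x = s i) := by
    simp only [Finset.mem_filter, Finset.mem_Icc]
    have := hz j (by omega)
    exact ⟨⟨this.1, this.2⟩, e1.symm⟩
  have hk : k ∈ (Icc 1 (2*m)).filter (fun x => s x = s i) := by
    simp only [Finset.mem_filter, Finset.mem_Icc]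
    have := hz k (by omega)
    exact ⟨⟨this.1, this.2⟩, by omega⟩
  rw [he] at hi hj hk
  simp only [Finset.mem_insert, Finset.mem_singleton] at hi hj hk
  omega

lemma no_peak (hs : StirN m s) (hle : ∀ i, s i ≤ m) {i : ℕ}
    (h1 : 1 ≤ i) (h2 : i ≤ 2*m) (ha : s (i-1) < s i) : s i ≤ s (i+1) := by
  classical
  obtain ⟨a, b, hab, he⟩ := pair_eq hs (v := s i) (by omega) (hle i)
  have hmem : ∀ x, x ∈ (Icc 1 (2*m)).filter (fun y => s y = s i) ↔ (x = a ∨ x = b) := by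
    intro x
    rw [he]
    simp
  have hi : i = a ∨ i = b := by
    rw [← hmem]
    simp only [Finset.mem_filter, Finset.mem_Icc]
    exact ⟨⟨h1, h2⟩, trivial⟩
  have hamem : a ∈ (Icc 1 (2*m)).filter (fun y => s y = s i) := by rw [hmem]; left; rfl
  have hbmem : b ∈ (Icc 1 (2*m)).filter (fun y => s y = s i) := by rw [hmem]; right; rfl
  simp only [Finset.mem_filter, Finset.mem_Icc] at hamem hbmem
  rcases hi with hi | hi
  · -- i is the first occurrence
    rcases Nat.lt_or_ge (i+1) b with hlt | hge
    · have := hs.2 i (i+1) b (by omega) (by omega) hlt (by omega) (by omega)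
      omega
    · have hb1 : b = i + 1 := by omega
      rw [hb1] at hbmem
      omega
  · -- i is the second occurrence: contradiction with ha
    exfalso
    rcases Nat.eq_or_lt_of_le (Nat.le_sub_one_of_lt (hi ▸ hab) : a ≤ i - 1) with heq | hlt
    · rw [heq] at hamem
      omega
    · have := hs.2 a (i-1) i (by omega) (by omega) (by omega) (by omega) (by omega)
      omega
  

noncomputable def Wt (s : ℕ → ℕ) (i : ℕ) : MvPolynomial (Fin 3) ℚ :=
  if s (i-1) < s i ∧ s i = s (i+1) then X 0
  else if s (i-1) < s i ∧ s i < s (i+1) then X 1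
  else if s i < s (i-1) ∧ s i = s (i+1) ∧ s i ≠ 0 then X 2
  else 1

lemma X_ne_one' (i : Fin 3) : (X i : MvPolynomial (Fin 3) ℚ) ≠ 1 := by
  intro h
  have := congrArg constantCoeff h
  simp at this

lemma X01 : (X 0 : MvPolynomial (Fin 3) ℚ) ≠ X 1 := fun h => by
  have := X_injective h; simp at this
lemma X02 : (X 0 : MvPolynomial (Fin 3) ℚ) ≠ X 2 := fun h => by
  have := X_injective h; simp at this
lemma X12 : (X 1 : MvPolynomial (Fin 3) ℚ) ≠ X 2 := fun h => by
  have := X_injective h; simp at this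

lemma Wt_eq_X0_iff (s : ℕ → ℕ) (i : ℕ) :
    Wt s i = X 0 ↔ (s (i-1) < s i ∧ s i = s (i+1)) := by
  unfold Wt
  split_ifs with h1 h2 h3
  · exact iff_of_true rfl h1
  · exact iff_of_false (fun h => X01 h.symm) h1
  · exact iff_of_false (fun h => X02 h.symm) h1
  · exact iff_of_false (fun h => X_ne_one' 0 h.symm) h1

lemma Wt_eq_X1_iff (s : ℕ → ℕ) (i : ℕ) :
    Wt s i = X 1 ↔ (s (i-1) < s i ∧ s i < s (i+1)) := by
  unfold Wt
  split_ifs with h1 h2 h3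
  · exact iff_of_false (fun h => X01 h) (by omega)
  · exact iff_of_true rfl h2
  · exact iff_of_false (fun h => X12 h.symm) h2
  · exact iff_of_false (fun h => X_ne_one' 1 h.symm) h2

lemma Wt_eq_X2_iff (s : ℕ → ℕ) (i : ℕ) :
    Wt s i = X 2 ↔ (s i < s (i-1) ∧ s i = s (i+1) ∧ s i ≠ 0) := by
  unfold Wt
  split_ifs with h1 h2 h3
  · exact iff_of_false (fun h => X02 h) (by omega)
  · exact iff_of_false (fun h => X12 h) (by omega)
  · exact iff_of_true rfl h3
  · exact iff_of_false (fun h => X_ne_one' 2 h.symm) h3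

lemma Wt_eq_one_of (s : ℕ → ℕ) (i : ℕ)
    (h1 : ¬(s (i-1) < s i ∧ s i = s (i+1)))
    (h2 : ¬(s (i-1) < s i ∧ s i < s (i+1)))
    (h3 : ¬(s i < s (i-1) ∧ s i = s (i+1) ∧ s i ≠ 0)) : Wt s i = 1 := by
  unfold Wt
  rw [if_neg h1, if_neg h2, if_neg h3]

lemma Wt_split (s : ℕ → ℕ) (i : ℕ) :
    Wt s i = (if s (i-1) < s i ∧ s i = s (i+1) then (X 0 : MvPolynomial (Fin 3) ℚ) else 1)
      * (if s (i-1) < s i ∧ s i < s (i+1) then X 1 else 1)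
      * (if s i < s (i-1) ∧ s i = s (i+1) ∧ s i ≠ 0 then X 2 else 1) := by
  unfold Wt
  split_ifs with h1 h2 h3 h4 h5 <;> first
    | (exfalso; omega)
    | ring


lemma prod_ite_one_pow {β : Type*} [CommMonoid β] (s : Finset ℕ) (p : ℕ → Prop)
    [DecidablePred p] (b : β) :
    ∏ i ∈ s, (if p i then b else 1) = b ^ (s.filter p).card := by
  rw [Finset.prod_ite, Finset.prod_const, Finset.prod_const_one, mul_one]

variable {m : ℕ}

lemma lap_bounds (σ : Fin (2*m) → Fin (m+1)) {i : ℕ}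
    (h : sval σ (i-1) < sval σ i ∧ sval σ i = sval σ (i+1)) : 1 ≤ i ∧ i ≤ 2*m-1 := by
  have h1 := sval_nonzero_bounds σ (i := i) (by omega)
  have h2 := sval_nonzero_bounds σ (i := i+1) (by omega)
  omega

lemma dasc_bounds (σ : Fin (2*m) → Fin (m+1)) {i : ℕ}
    (h : sval σ (i-1) < sval σ i ∧ sval σ i < sval σ (i+1)) : 1 ≤ i ∧ i ≤ 2*m-1 := by
  have h1 := sval_nonzero_bounds σ (i := i) (by omega)
  have h2 := sval_nonzero_bounds σ (i := i+1) (by omega)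
  omega

lemma dp_bounds (σ : Fin (2*m) → Fin (m+1)) {i : ℕ}
    (h : sval σ i < sval σ (i-1) ∧ sval σ i = sval σ (i+1) ∧ sval σ i ≠ 0) :
    2 ≤ i ∧ i ≤ 2*m-1 := by
  have h1 := sval_nonzero_bounds σ (i := i) (by omega)
  have h2 := sval_nonzero_bounds σ (i := i+1) (by omega)
  have h3 := sval_nonzero_bounds σ (i := i-1) (by omega)
  omega

lemma card_filter_lap (σ : Fin (2*m) → Fin (m+1)) (S : Finset ℕ)
    (hS : Icc 1 (2*m-1) ⊆ S) :
    (S.filter (fun i => sval σ (i-1) < sval σ i ∧ sval σ i = sval σ (i+1))).card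
      = lapQ σ := by
  unfold lapQ
  congr 1
  apply Finset.ext
  intro i
  simp only [Finset.mem_filter, Finset.mem_Icc]
  constructor
  · rintro ⟨_, hc⟩
    exact ⟨lap_bounds σ hc, hc⟩
  · rintro ⟨hb, hc⟩
    exact ⟨hS (Finset.mem_Icc.mpr hb), hc⟩

lemma card_filter_dasc (σ : Fin (2*m) → Fin (m+1)) (S : Finset ℕ)
    (hS : Icc 1 (2*m-1) ⊆ S) :
    (S.filter (fun i => sval σ (i-1) < sval σ i ∧ sval σ i < sval σ (i+1))).card
      = dascQ σ := by
  unfold dascQ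
  congr 1
  apply Finset.ext
  intro i
  simp only [Finset.mem_filter, Finset.mem_Icc]
  constructor
  · rintro ⟨_, hc⟩
    exact ⟨dasc_bounds σ hc, hc⟩
  · rintro ⟨hb, hc⟩
    exact ⟨hS (Finset.mem_Icc.mpr hb), hc⟩

lemma card_filter_dp (σ : Fin (2*m) → Fin (m+1)) (hσ : σ ∈ StirlingSet m) (S : Finset ℕ)
    (hS : Icc 2 (2*m-1) ⊆ S) :
    (S.filter (fun i => sval σ i < sval σ (i-1) ∧ sval σ i = sval σ (i+1) ∧ sval σ i ≠ 0)).card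
      = dpQ σ := by
  have hs := (mem_stirling_iff σ).mp hσ
  unfold dpQ
  congr 1
  apply Finset.ext
  intro i
  simp only [Finset.mem_filter, Finset.mem_Icc]
  constructor
  · rintro ⟨_, hc⟩
    exact ⟨dp_bounds σ hc, hc.1, hc.2.1⟩
  · rintro ⟨hb, hc⟩
    have : 1 ≤ sval σ i := (s_mem hs (by omega) (by omega)).1
    exact ⟨hS (Finset.mem_Icc.mpr hb), hc.1, hc.2, by omega⟩

lemma mono_eq_prod (σ : Fin (2*m) → Fin (m+1)) (hσ : σ ∈ StirlingSet m) :
    X 0 ^ lapQ σ * X 1 ^ dascQ σ * X 2 ^ dpQ σ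
      = ∏ i ∈ range (2*m+2), Wt (sval σ) i := by
  rw [Finset.prod_congr rfl (fun i _ => Wt_split (sval σ) i)]
  rw [Finset.prod_mul_distrib, Finset.prod_mul_distrib]
  rw [prod_ite_one_pow, prod_ite_one_pow, prod_ite_one_pow]
  rw [card_filter_lap σ _ (fun i hi => by simp only [Finset.mem_Icc] at hi; simp only [Finset.mem_range]; omega)]
  rw [card_filter_dasc σ _ (fun i hi => by simp only [Finset.mem_Icc] at hi; simp only [Finset.mem_range]; omega)]
  rw [card_filter_dp σ hσ _ (fun i hi => by simp only [Finset.mem_Icc] at hi; simp only [Finset.mem_range]; omega)]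


variable {n : ℕ}

def insv (σ : Fin (2*n) → Fin (n+1)) (p j : ℕ) : ℕ :=
  if h1 : j < p ∧ j < 2*n then (σ ⟨j, h1.2⟩ : ℕ)
  else if j < p + 2 then n+1
  else if h3 : j - 2 < 2*n then (σ ⟨j-2, h3⟩ : ℕ) else 0

lemma insv_lt (σ : Fin (2*n) → Fin (n+1)) (p j : ℕ) : insv σ p j < n+2 := by
  unfold insv
  split_ifs with h1 h2 h3
  · have := Fin.is_lt (σ ⟨j, h1.2⟩); omega
  · omega
  · have := Fin.is_lt (σ ⟨j-2, h3⟩); omega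
  · omega

def ins (σ : Fin (2*n) → Fin (n+1)) (p : ℕ) : Fin (2*(n+1)) → Fin (n+2) :=
  fun i => ⟨insv σ p (i : ℕ), insv_lt σ p _⟩

lemma sval_ins (σ : Fin (2*n) → Fin (n+1)) (p : ℕ) {i : ℕ}
    (h1 : 1 ≤ i) (h2 : i ≤ 2*(n+1)) :
    sval (ins σ p) i = insv σ p (i-1) := by
  rw [sval_eq_val (ins σ p) h1 h2]
  rfl

lemma sval_ins_a (σ : Fin (2*n) → Fin (n+1)) {p i : ℕ} (hp : p ≤ 2*n) (hi : i ≤ p) :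
    sval (ins σ p) i = sval σ i := by
  rcases Nat.eq_zero_or_pos i with h0 | h0
  · rw [sval_zero _ (Or.inl h0), sval_zero _ (Or.inl h0)]
  · rw [sval_ins σ p h0 (by omega), sval_eq_val σ h0 (by omega)]
    unfold insv
    rw [dif_pos ⟨by omega, by omega⟩]

lemma sval_ins_b (σ : Fin (2*n) → Fin (n+1)) {p i : ℕ} (hp : p ≤ 2*n)
    (hi1 : p+1 ≤ i) (hi2 : i ≤ p+2) :
    sval (ins σ p) i = n+1 := by
  rw [sval_ins σ p (by omega) (by omega)]
  unfold insv
  rw [dif_neg (by omega), if_pos (by omega)]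

lemma sval_ins_c (σ : Fin (2*n) → Fin (n+1)) {p i : ℕ} (hp : p ≤ 2*n)
    (hi : p+3 ≤ i) :
    sval (ins σ p) i = sval σ (i-2) := by
  rcases Nat.lt_or_ge (2*(n+1)) i with h0 | h0
  · rw [sval_zero _ (Or.inr h0), sval_zero _ (Or.inr (by omega))]
  · rw [sval_ins σ p (by omega) (by omega), sval_eq_val σ (i := i - 2) (by omega) (by omega)]
    unfold insv
    rw [dif_neg (by omega), if_neg (by omega), dif_pos (by omega)]
    congr 2


lemma sval_ins_fiber (σ : Fin (2*n) → Fin (n+1)) {p : ℕ} (hp : p ≤ 2*n) (i : ℕ) :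
    sval (ins σ p) i = n+1 ↔ (i = p+1 ∨ i = p+2) := by
  constructor
  · intro h
    by_contra hc
    push_neg at hc
    rcases Nat.lt_or_ge p i with h1 | h1
    · have : p + 3 ≤ i := by omega
      rw [sval_ins_c σ hp this] at h
      have := sval_le σ (i-2)
      omega
    · rw [sval_ins_a σ hp h1] at h
      have := sval_le σ i
      omega
  · rintro (h | h) <;> (subst h; exact sval_ins_b σ hp (by omega) (by omega))

lemma card_shift {p N v : ℕ} (f g : ℕ → ℕ)
    (h1 : ∀ i, 1 ≤ i → i ≤ p → f i = g i)
    (h2 : ∀ i, p+1 ≤ i → i ≤ N → f i = g (i+2))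
    (hN : p ≤ N)
    (hg1 : g (p+1) ≠ v) (hg2 : g (p+2) ≠ v) :
    ((Icc 1 N).filter (fun i => f i = v)).card
      = ((Icc 1 (N+2)).filter (fun i => g i = v)).card := by
  classical
  refine Finset.card_bij' (fun a _ => if a ≤ p then a else a + 2)
    (fun b _ => if b ≤ p then b else b - 2) ?_ ?_ ?_ ?_
  · intro a ha
    simp only [Finset.mem_filter, Finset.mem_Icc] at ha ⊢
    rcases le_or_gt a p with h | h
    · rw [if_pos h]
      exact ⟨⟨ha.1.1, by omega⟩, by rw [← h1 a ha.1.1 h]; exact ha.2⟩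
    · rw [if_neg (by omega)]
      exact ⟨⟨by omega, by omega⟩, by rw [← h2 a (by omega) ha.1.2]; exact ha.2⟩
  · intro b hb
    simp only [Finset.mem_filter, Finset.mem_Icc] at hb ⊢
    rcases le_or_gt b p with h | h
    · rw [if_pos h]
      exact ⟨⟨hb.1.1, by omega⟩, by rw [h1 b hb.1.1 h]; exact hb.2⟩
    · have hb3 : p + 3 ≤ b := by
        rcases Nat.lt_or_ge b (p+3) with h' | h'
        · exfalso
          have hcase : b = p+1 ∨ b = p+2 := by omega
          rcases hcase with h'' | h'' <;> (rw [h''] at hb; tauto)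
        · exact h'
      rw [if_neg (by omega)]
      refine ⟨⟨by omega, by omega⟩, ?_⟩
      rw [h2 (b-2) (by omega) (by omega)]
      have hbb : b - 2 + 2 = b := by omega
      rw [hbb]
      exact hb.2
  · intro a ha
    simp only [Finset.mem_filter, Finset.mem_Icc] at ha
    split_ifs <;> omega
  · intro b hb
    simp only [Finset.mem_filter, Finset.mem_Icc] at hb
    have hb3 : b ≤ p ∨ p + 3 ≤ b := by
      rcases le_or_gt b p with h | h
      · exact Or.inl h
      rcases Nat.lt_or_ge b (p+3) with h' | h'
      · exfalso
        have hcase : b = p+1 ∨ b = p+2 := by omega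
        rcases hcase with h'' | h'' <;> (rw [h''] at hb; tauto)
      · exact Or.inr h'
    split_ifs <;> omega

lemma ins_mem {σ : Fin (2*n) → Fin (n+1)} (hσ : σ ∈ StirlingSet n) {p : ℕ} (hp : p ≤ 2*n) :
    ins σ p ∈ StirlingSet (n+1) := by
  have hs := (mem_stirling_iff σ).mp hσ
  rw [mem_stirling_iff]
  have h2n2 : 2*(n+1) = 2*n+2 := by ring
  constructor
  · intro v hv1 hv2
    rcases Nat.lt_or_ge v (n+1) with hv | hv
    · rw [h2n2, ← card_shift (sval σ) (sval (ins σ p))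
        (fun i hi1 hi2 => (sval_ins_a σ hp hi2).symm)
        (fun i hi1 hi2 => by rw [sval_ins_c σ hp (by omega)]; congr 1)
        hp
        (by rw [sval_ins_b σ hp (by omega) (by omega)]; omega)
        (by rw [sval_ins_b σ hp (by omega) (by omega)]; omega)]
      exact hs.1 v hv1 (by omega)
    · have hv' : v = n+1 := by omega
      subst hv'
      have hset : (Icc 1 (2*(n+1))).filter (fun i => sval (ins σ p) i = n+1) = {p+1, p+2} := by
        apply Finset.ext
        intro i
        simp only [Finset.mem_filter, Finset.mem_Icc, Finset.mem_insert, Finset.mem_singleton]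
        constructor
        · rintro ⟨_, hc⟩
          exact (sval_ins_fiber σ hp i).mp hc
        · rintro (h | h) <;> subst h
          · exact ⟨⟨by omega, by omega⟩, (sval_ins_fiber σ hp _).mpr (Or.inl rfl)⟩
          · exact ⟨⟨by omega, by omega⟩, (sval_ins_fiber σ hp _).mpr (Or.inr rfl)⟩
      rw [hset]
      rw [Finset.card_insert_of_notMem (by simp), Finset.card_singleton]
  · intro i j k hi hij hjk hk he
    rcases Nat.lt_or_ge (sval (ins σ p) i) (n+1) with hv | hv
    · -- value ≤ n
      have hine : ¬(i = p+1 ∨ i = p+2) := by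
        intro hc
        have := (sval_ins_fiber σ hp i).mpr hc
        omega
      have hkne : ¬(k = p+1 ∨ k = p+2) := by
        intro hc
        have h' := (sval_ins_fiber σ hp k).mpr hc
        rw [← he] at h'
        omega
      by_cases hj12 : j = p+1 ∨ j = p+2
      · have : sval (ins σ p) j = n+1 :=
          (sval_ins_fiber σ hp j).mpr hj12
        omega
      · have key : ∀ x, 1 ≤ x → x ≤ 2*(n+1) → ¬(x = p+1 ∨ x = p+2) →
            sval (ins σ p) x = sval σ (if x ≤ p then x else x - 2) := by
          intro x hx1 hx2 hx3
          rcases le_or_gt x p with h | h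
          · rw [if_pos h, sval_ins_a σ hp h]
          · rw [if_neg (by omega), sval_ins_c σ hp (by omega)]
        have hki := key i (by omega) (by omega) hine
        have hkk := key k (by omega) (by omega) hkne
        have hkj := key j (by omega) (by omega) hj12
        rw [hki, hkj]
        apply hs.2 _ _ (if k ≤ p then k else k - 2)
        · split <;> omega
        · split_ifs <;> omega
        · split_ifs <;> omega
        · split <;> omega
        · rw [← hki, ← hkk]; exact he
    · -- value = n+1 : impossible since i, k both in {p+1, p+2} and j strictly between
      exfalso
      have hv' : sval (ins σ p) i = n+1 := by
        have := sval_le (ins σ p) i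
        omega
      have h1 := (sval_ins_fiber σ hp i).mp hv'
      have h2 := (sval_ins_fiber σ hp k).mp (by rw [← he]; exact hv')
      omega

lemma ins_inj {σ σ' : Fin (2*n) → Fin (n+1)} {p p' : ℕ} (hp : p ≤ 2*n) (hp' : p' ≤ 2*n)
    (h : ins σ p = ins σ' p') : p = p' ∧ σ = σ' := by
  have hpp : p = p' := by
    have h1 : sval (ins σ p) (p+1) = n+1 := sval_ins_b σ hp (by omega) (by omega)
    have h2 : sval (ins σ' p') (p'+1) = n+1 := sval_ins_b σ' hp' (by omega) (by omega)
    rw [h] at h1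
    rw [← h] at h2
    have e1 := (sval_ins_fiber σ' hp' (p+1)).mp h1
    have e2 := (sval_ins_fiber σ hp (p'+1)).mp h2
    omega
  subst hpp
  refine ⟨rfl, sval_ext fun i => ?_⟩
  rcases le_or_gt i p with hle | hlt
  · rw [← sval_ins_a σ hp hle, ← sval_ins_a σ' hp hle, h]
  · have e1 : sval σ i = sval (ins σ p) (i+2) := by
      rw [sval_ins_c σ hp (by omega)]
      congr 1
    have e2 : sval σ' i = sval (ins σ' p) (i+2) := by
      rw [sval_ins_c σ' hp (by omega)]
      congr 1
    rw [e1, e2, h]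


def delv (τ : Fin (2*(n+1)) → Fin (n+2)) (p j : ℕ) : ℕ :=
  if j < p then min (sval τ (j+1)) n else min (sval τ (j+3)) n

lemma delv_lt (τ : Fin (2*(n+1)) → Fin (n+2)) (p j : ℕ) : delv τ p j < n+1 := by
  unfold delv
  split <;> omega

def del (τ : Fin (2*(n+1)) → Fin (n+2)) (p : ℕ) : Fin (2*n) → Fin (n+1) :=
  fun i => ⟨delv τ p (i : ℕ), delv_lt τ p _⟩

lemma sval_del (τ : Fin (2*(n+1)) → Fin (n+2)) (p : ℕ) {i : ℕ}
    (h1 : 1 ≤ i) (h2 : i ≤ 2*n) :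
    sval (del τ p) i = delv τ p (i-1) := by
  rw [sval_eq_val (del τ p) h1 h2]
  rfl

lemma sval_del_a (τ : Fin (2*(n+1)) → Fin (n+2)) {p i : ℕ}
    (h1 : 1 ≤ i) (h2 : i ≤ p) (hp : p ≤ 2*n) :
    sval (del τ p) i = min (sval τ i) n := by
  rw [sval_del τ p h1 (by omega)]
  unfold delv
  rw [if_pos (by omega)]
  congr 2
  omega

lemma sval_del_b (τ : Fin (2*(n+1)) → Fin (n+2)) {p i : ℕ}
    (h1 : p+1 ≤ i) (h2 : i ≤ 2*n) :
    sval (del τ p) i = min (sval τ (i+2)) n := by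
  rw [sval_del τ p (by omega) h2]
  unfold delv
  rw [if_neg (by omega)]
  congr 2
  omega

lemma exists_ins {τ : Fin (2*(n+1)) → Fin (n+2)} (hτ : τ ∈ StirlingSet (n+1)) :
    ∃ σ ∈ StirlingSet n, ∃ p ≤ 2*n, ins σ p = τ := by
  have hs := (mem_stirling_iff τ).mp hτ
  obtain ⟨a, b, hab, hpair⟩ := pair_eq hs (v := n+1) (by omega) (le_refl _)
  have hmem : ∀ x, (1 ≤ x ∧ x ≤ 2*(n+1)) ∧ sval τ x = n+1 ↔ (x = a ∨ x = b) := by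
    intro x
    constructor
    · intro hx
      have : x ∈ (Icc 1 (2*(n+1))).filter (fun i => sval τ i = n+1) := by
        simp only [Finset.mem_filter, Finset.mem_Icc]
        exact hx
      rw [hpair] at this
      simpa using this
    · intro hx
      have : x ∈ (Icc 1 (2*(n+1))).filter (fun i => sval τ i = n+1) := by
        rw [hpair]; simpa using hx
      simpa only [Finset.mem_filter, Finset.mem_Icc] using this
  have ha := (hmem a).mpr (Or.inl rfl)
  have hb := (hmem b).mpr (Or.inr rfl)
  have hb1 : b = a + 1 := by
    by_contra hc
    have h2 : a + 1 < b := by omega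
    have := hs.2 a (a+1) b (by omega) (by omega) h2 (by omega) (by omega)
    have := sval_le τ (a+1)
    omega
  set p := a - 1 with hpdef
  have hp : p ≤ 2*n := by omega
  have hfib : ∀ i, sval τ i = n+1 ↔ (i = p+1 ∨ i = p+2) := by
    intro i
    constructor
    · intro h
      have hbd := sval_nonzero_bounds τ (i := i) (by omega)
      have := (hmem i).mp ⟨hbd, h⟩
      omega
    · intro h
      have : i = a ∨ i = b := by omega
      rcases this with h' | h' <;> (subst h'; omega)
  have tle : ∀ i, i ≠ p+1 → i ≠ p+2 → sval τ i ≤ n := by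
    intro i hi1 hi2
    have h1 := sval_le τ i
    have h2 := (hfib i)
    omega
  have e1 : ∀ i, 1 ≤ i → i ≤ p → sval (del τ p) i = sval τ i := by
    intro i hi1 hi2
    rw [sval_del_a τ hi1 hi2 hp]
    have := tle i (by omega) (by omega)
    omega
  have e2 : ∀ i, p+1 ≤ i → i ≤ 2*n → sval (del τ p) i = sval τ (i+2) := by
    intro i hi1 hi2
    rw [sval_del_b τ hi1 hi2]
    have := tle (i+2) (by omega) (by omega)
    omega
  have hσ : del τ p ∈ StirlingSet n := by
    rw [mem_stirling_iff]
    constructor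
    · intro v hv1 hv2
      rw [card_shift (sval (del τ p)) (sval τ) e1 e2 hp
        (by rw [(hfib (p+1)).mpr (Or.inl rfl)]; omega)
        (by rw [(hfib (p+2)).mpr (Or.inr rfl)]; omega)]
      have h22 : 2*n+2 = 2*(n+1) := by ring
      rw [h22]
      exact hs.1 v hv1 (by omega)
    · intro i j k hi hij hjk hk he
      have key : ∀ x, 1 ≤ x → x ≤ 2*n →
          sval (del τ p) x = sval τ (if x ≤ p then x else x + 2) := by
        intro x hx1 hx2
        rcases le_or_gt x p with h | h
        · rw [if_pos h]; exact e1 x hx1 h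
        · rw [if_neg (by omega)]; exact e2 x (by omega) hx2
      have hki := key i (by omega) (by omega)
      have hkj := key j (by omega) (by omega)
      have hkk := key k (by omega) hk
      rw [hki, hkj]
      apply hs.2 _ _ (if k ≤ p then k else k + 2)
      · split <;> omega
      · split_ifs <;> omega
      · split_ifs <;> omega
      · split <;> omega
      · rw [← hki, ← hkk]; exact he
  refine ⟨del τ p, hσ, p, hp, sval_ext fun i => ?_⟩
  rcases Nat.eq_zero_or_pos i with h0 | h0
  · rw [sval_zero _ (Or.inl h0), sval_zero _ (Or.inl h0)]
  rcases le_or_gt i p with hle | hlt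
  · rw [sval_ins_a (del τ p) hp hle, e1 i h0 hle]
  rcases le_or_gt i (p+2) with hle2 | hlt2
  · rw [sval_ins_b (del τ p) hp (by omega) hle2, (hfib i).mpr (by omega)]
  rcases le_or_gt i (2*(n+1)) with hle3 | hlt3
  · rw [sval_ins_c (del τ p) hp (by omega), e2 (i-2) (by omega) (by omega)]
    congr 1
    omega
  · rw [sval_zero _ (Or.inr hlt3), sval_zero _ (Or.inr (by omega))]

lemma sum_ins_eq {M : Type*} [AddCommMonoid M] (F : (Fin (2*(n+1)) → Fin (n+2)) → M) :
    ∑ q ∈ (StirlingSet n) ×ˢ (range (2*n+1)), F (ins q.1 q.2)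
      = ∑ τ ∈ StirlingSet (n+1), F τ := by
  apply Finset.sum_nbij (fun q => ins q.1 q.2)
  · rintro ⟨σ, p⟩ hq
    rw [Finset.mem_product, Finset.mem_range] at hq
    exact ins_mem hq.1 (by omega)
  · rintro ⟨σ, p⟩ hq ⟨σ', p'⟩ hq' h
    simp only [Finset.coe_product, Set.mem_prod, Finset.mem_coe, Finset.mem_range] at hq hq'
    obtain ⟨h1, h2⟩ := ins_inj (by omega : p ≤ 2*n) (by omega : p' ≤ 2*n) h
    exact Prod.ext h2 h1
  · intro τ hτ
    simp only [Finset.mem_coe] at hτ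
    obtain ⟨σ, hσ, p, hp, he⟩ := exists_ins hτ
    refine ⟨(σ, p), ?_, he⟩
    simp only [Finset.coe_product, Set.mem_prod, Finset.mem_coe, Finset.mem_range]
    exact ⟨hσ, by omega⟩
  · intro q hq
    rfl


noncomputable def Ap (s : ℕ → ℕ) (p : ℕ) : MvPolynomial (Fin 3) ℚ :=
  if s (p-1) < s p then X 1 else 1

noncomputable def Bp (s : ℕ → ℕ) (p : ℕ) : MvPolynomial (Fin 3) ℚ :=
  if s (p+1) = s (p+2) ∧ s (p+1) ≠ 0 then X 2 else 1

noncomputable def Gp {n : ℕ} (σ : Fin (2*n) → Fin (n+1)) (p : ℕ) : MvPolynomial (Fin 3) ℚ :=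
  ∏ i ∈ ((range (2*n+2)).erase p).erase (p+1), Wt (sval σ) i

section PerGap

variable {σ : Fin (2*n) → Fin (n+1)} {p : ℕ}

lemma WtP1 (hp : p ≤ 2*n) {i : ℕ} (hi : i < p) :
    Wt (sval (ins σ p)) i = Wt (sval σ) i := by
  have e1 : sval (ins σ p) (i-1) = sval σ (i-1) := sval_ins_a σ hp (by omega)
  have e2 : sval (ins σ p) i = sval σ i := sval_ins_a σ hp (by omega)
  have e3 : sval (ins σ p) (i+1) = sval σ (i+1) := sval_ins_a σ hp (by omega)
  unfold Wt
  rw [e1, e2, e3]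

lemma WtP2 (hp : p ≤ 2*n) : Wt (sval (ins σ p)) p = Ap (sval σ) p := by
  rcases Nat.eq_zero_or_pos p with h0 | h0
  · subst h0
    have z : sval (ins σ 0) 0 = 0 := sval_zero _ (Or.inl rfl)
    have z2 : sval σ 0 = 0 := sval_zero _ (Or.inl rfl)
    rw [Wt_eq_one_of _ _ (by rw [z]; omega) (by rw [z]; omega) (by rw [z]; omega)]
    unfold Ap
    rw [if_neg (by rw [z2]; omega)]
  · have e1 : sval (ins σ p) (p-1) = sval σ (p-1) := sval_ins_a σ hp (by omega)
    have e2 : sval (ins σ p) p = sval σ p := sval_ins_a σ hp (by omega)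
    have e3 : sval (ins σ p) (p+1) = n+1 := sval_ins_b σ hp (by omega) (by omega)
    have hle : sval σ p ≤ n := sval_le σ p
    unfold Wt Ap
    rw [e1, e2, e3]
    split_ifs <;> first | rfl | (exfalso; omega)

lemma WtP3 (hp : p ≤ 2*n) : Wt (sval (ins σ p)) (p+1) = X 0 := by
  have e1 : sval (ins σ p) p = sval σ p := sval_ins_a σ hp (by omega)
  have e2 : sval (ins σ p) (p+1) = n+1 := sval_ins_b σ hp (by omega) (by omega)
  have e3 : sval (ins σ p) (p+2) = n+1 := sval_ins_b σ hp (by omega) (by omega)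
  have hle : sval σ p ≤ n := sval_le σ p
  unfold Wt
  have hidx : p + 1 - 1 = p := by omega
  rw [hidx, e1, e2, e3]
  rw [if_pos ⟨by omega, rfl⟩]

lemma WtP4 (hp : p ≤ 2*n) : Wt (sval (ins σ p)) (p+2) = 1 := by
  have e1 : sval (ins σ p) (p+1) = n+1 := sval_ins_b σ hp (by omega) (by omega)
  have e2 : sval (ins σ p) (p+2) = n+1 := sval_ins_b σ hp (by omega) (by omega)
  have hidx : p + 2 - 1 = p + 1 := by omega
  apply Wt_eq_one_of
  · rw [hidx, e1, e2]; omega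
  · rw [hidx, e1, e2]; omega
  · rw [hidx, e1, e2]; omega

lemma WtP5 (hp : p ≤ 2*n) : Wt (sval (ins σ p)) (p+3) = Bp (sval σ) p := by
  have e1 : sval (ins σ p) (p+2) = n+1 := sval_ins_b σ hp (by omega) (by omega)
  have e2 : sval (ins σ p) (p+3) = sval σ (p+1) := by
    rw [sval_ins_c σ hp (by omega)]
    all_goals (congr 1 <;> omega)
  have e3 : sval (ins σ p) (p+4) = sval σ (p+2) := by
    rw [sval_ins_c σ hp (by omega)]
    all_goals (congr 1 <;> omega)
  have hle : sval σ (p+1) ≤ n := sval_le σ (p+1)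
  have hidx : p + 3 - 1 = p + 2 := by omega
  unfold Wt Bp
  rw [hidx, e1, e2]
  rw [show p + 3 + 1 = p + 4 from rfl, e3]
  split_ifs <;> first | rfl | (exfalso; omega)

lemma WtP6 (hp : p ≤ 2*n) {i : ℕ} (hi : p + 4 ≤ i) :
    Wt (sval (ins σ p)) i = Wt (sval σ) (i-2) := by
  have e1 : sval (ins σ p) (i-1) = sval σ (i-3) := by
    rw [sval_ins_c σ hp (by omega)]
    all_goals (congr 1 <;> omega)
  have e2 : sval (ins σ p) i = sval σ (i-2) := sval_ins_c σ hp (by omega)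
  have e3 : sval (ins σ p) (i+1) = sval σ (i-1) := by
    rw [sval_ins_c σ hp (by omega)]
    all_goals (congr 1 <;> omega)
  unfold Wt
  rw [e1, e2, e3, show i - 2 - 1 = i - 3 from by omega, show i - 2 + 1 = i - 1 from by omega]

lemma erase_union (hp : p ≤ 2*n) :
    ((range (2*n+2)).erase p).erase (p+1) = Ico 0 p ∪ Ico (p+2) (2*n+2) := by
  apply Finset.ext
  intro i
  simp only [Finset.mem_erase, Finset.mem_range, Finset.mem_union, Finset.mem_Ico]
  omega

lemma prod_ins_eq (hp : p ≤ 2*n) :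
    ∏ i ∈ range (2*(n+1)+2), Wt (sval (ins σ p)) i
      = X 0 * (Ap (sval σ) p * Bp (sval σ) p * Gp σ p) := by
  have hr : 2*(n+1)+2 = 2*n+4 := by ring
  rw [hr]
  have hsplit1 : (∏ i ∈ Ico 0 p, Wt (sval (ins σ p)) i)
      * (∏ i ∈ Ico p (2*n+4), Wt (sval (ins σ p)) i)
      = ∏ i ∈ range (2*n+4), Wt (sval (ins σ p)) i := by
    rw [Finset.range_eq_Ico]
    exact Finset.prod_Ico_consecutive _ (by omega) (by omega)
  have hsplit2 : (∏ i ∈ Ico p (p+4), Wt (sval (ins σ p)) i)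
      * (∏ i ∈ Ico (p+4) (2*n+4), Wt (sval (ins σ p)) i)
      = ∏ i ∈ Ico p (2*n+4), Wt (sval (ins σ p)) i :=
    Finset.prod_Ico_consecutive _ (by omega) (by omega)
  rw [← hsplit1, ← hsplit2]
  have hmid : ∏ i ∈ Ico p (p+4), Wt (sval (ins σ p)) i
      = Ap (sval σ) p * X 0 * 1 * Bp (sval σ) p := by
    rw [Finset.prod_Ico_eq_prod_range]
    rw [show p + 4 - p = 4 from by omega]
    rw [Finset.prod_range_succ, Finset.prod_range_succ, Finset.prod_range_succ,
      Finset.prod_range_one]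
    rw [show p + 0 = p from rfl, show p + 1 = p+1 from rfl]
    rw [WtP2 hp, WtP3 hp, WtP4 hp, WtP5 hp]
  have htail : ∏ i ∈ Ico (p+4) (2*n+4), Wt (sval (ins σ p)) i
      = ∏ i ∈ Ico (p+2) (2*n+2), Wt (sval σ) i := by
    rw [Finset.prod_Ico_eq_prod_range, Finset.prod_Ico_eq_prod_range]
    rw [show 2*n+4 - (p+4) = 2*n+2 - (p+2) from by omega]
    apply Finset.prod_congr rfl
    intro i _
    rw [WtP6 hp (by omega)]
    congr 1
    omega
  have hhead : ∏ i ∈ Ico 0 p, Wt (sval (ins σ p)) i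
      = ∏ i ∈ Ico 0 p, Wt (sval σ) i := by
    apply Finset.prod_congr rfl
    intro i hi
    rw [Finset.mem_Ico] at hi
    exact WtP1 hp hi.2
  rw [hmid, htail, hhead]
  have hG : Gp σ p = (∏ i ∈ Ico 0 p, Wt (sval σ) i) * ∏ i ∈ Ico (p+2) (2*n+2), Wt (sval σ) i := by
    unfold Gp
    rw [erase_union hp]
    rw [Finset.prod_union (by
      rw [Finset.disjoint_left]
      intro a ha hb
      rw [Finset.mem_Ico] at ha hb
      omega)]
  rw [hG]
  ring

lemma M_eq (hp : p ≤ 2*n) :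
    ∏ i ∈ range (2*n+2), Wt (sval σ) i
      = Wt (sval σ) p * Wt (sval σ) (p+1) * Gp σ p := by
  rw [← Finset.mul_prod_erase (range (2*n+2)) _ (Finset.mem_range.mpr (by omega) : p ∈ range (2*n+2))]
  rw [← Finset.mul_prod_erase ((range (2*n+2)).erase p) _
    (by rw [Finset.mem_erase, Finset.mem_range]; exact ⟨by omega, by omega⟩ : p+1 ∈ (range (2*n+2)).erase p)]
  rw [Gp, mul_assoc]

end PerGap


section Classes

variable {σ : Fin (2*n) → Fin (n+1)} {p : ℕ}

-- abbreviation for the monomial of σ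
local notation "Mo" => X 0 ^ lapQ σ * X 1 ^ dascQ σ * X 2 ^ dpQ σ

lemma hM_eq (hσ : σ ∈ StirlingSet n) (hp : p ≤ 2*n) :
    (Mo : MvPolynomial (Fin 3) ℚ) = Wt (sval σ) p * Wt (sval σ) (p+1) * Gp σ p :=
  (mono_eq_prod σ hσ).trans (M_eq hp)

lemma class1 (hσ : σ ∈ StirlingSet n) (hp : p ≤ 2*n)
    (h : Wt (sval σ) p = X 0) :
    X 0 * (Ap (sval σ) p * Bp (sval σ) p * Gp σ p) = X 1 * Mo := by
  have hs := (mem_stirling_iff σ).mp hσ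
  have hc := (Wt_eq_X0_iff (sval σ) p).mp h
  have hA : Ap (sval σ) p = X 1 := if_pos hc.1
  have hB : Bp (sval σ) p = 1 := by
    apply if_neg
    rintro ⟨hb1, hb2⟩
    exact no_triple hs (fun i hi => sval_nonzero_bounds σ hi) (sval_le σ)
      (show p < p+1 by omega) (show p+1 < p+2 by omega)
      (show sval σ p ≠ 0 by omega) hc.2 hb1
  have hW1 : Wt (sval σ) (p+1) = 1 := by
    apply Wt_eq_one_of <;> (show ¬_ ; rw [show p+1-1 = p from rfl]) <;> omega
  rw [hA, hB, hM_eq hσ hp, h, hW1]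
  ring

lemma class2 (hσ : σ ∈ StirlingSet n) (hp : p ≤ 2*n)
    (h : Wt (sval σ) p = X 2) :
    X 0 * (Ap (sval σ) p * Bp (sval σ) p * Gp σ p)
      = X 0 * (X 0 ^ lapQ σ * X 1 ^ dascQ σ * X 2 ^ (dpQ σ - 1)) := by
  have hs := (mem_stirling_iff σ).mp hσ
  have hc := (Wt_eq_X2_iff (sval σ) p).mp h
  have hA : Ap (sval σ) p = 1 := if_neg (by omega)
  have hB : Bp (sval σ) p = 1 := by
    apply if_neg
    rintro ⟨hb1, hb2⟩
    exact no_triple hs (fun i hi => sval_nonzero_bounds σ hi) (sval_le σ)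
      (show p < p+1 by omega) (show p+1 < p+2 by omega)
      hc.2.2 hc.2.1 hb1
  have hW1 : Wt (sval σ) (p+1) = 1 := by
    apply Wt_eq_one_of <;> (show ¬_ ; rw [show p+1-1 = p from rfl]) <;> omega
  have he1 : 1 ≤ dpQ σ := by
    rw [dpQ]
    apply Finset.card_pos.mpr
    refine ⟨p, ?_⟩
    simp only [Finset.mem_filter, Finset.mem_Icc]
    have hbd := dp_bounds σ hc
    exact ⟨⟨hbd.1, hbd.2⟩, hc.1, hc.2.1⟩
  apply mul_left_cancel₀ (X_ne_zero (2 : Fin 3))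
  calc X 2 * (X 0 * (Ap (sval σ) p * Bp (sval σ) p * Gp σ p))
      = X 0 * (X 2 * 1 * Gp σ p) := by rw [hA, hB]; ring
    _ = X 0 * Mo := by rw [hM_eq hσ hp, h, hW1]
    _ = X 0 * (X 0 ^ lapQ σ * X 1 ^ dascQ σ * X 2 ^ (dpQ σ - 1 + 1)) := by
        rw [show dpQ σ - 1 + 1 = dpQ σ from by omega]
    _ = X 2 * (X 0 * (X 0 ^ lapQ σ * X 1 ^ dascQ σ * X 2 ^ (dpQ σ - 1))) := by
        rw [pow_succ]; ring

lemma Ap_eq_Wt (hσ : σ ∈ StirlingSet n) (hlt : sval σ p < sval σ (p+1)) :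
    Ap (sval σ) p = Wt (sval σ) p := by
  by_cases hx : sval σ (p-1) < sval σ p
  · rw [Ap, if_pos hx, (Wt_eq_X1_iff (sval σ) p).mpr ⟨hx, hlt⟩]
  · rw [Ap, if_neg hx, Wt_eq_one_of _ _ (by omega) (by omega) (by omega)]

lemma class3 (hσ : σ ∈ StirlingSet n) (hp : p ≤ 2*n)
    (h : Wt (sval σ) (p+1) = X 0) :
    X 0 * (Ap (sval σ) p * Bp (sval σ) p * Gp σ p) = X 2 * Mo := by
  have hc := (Wt_eq_X0_iff (sval σ) (p+1)).mp h
  rw [show p+1-1 = p from rfl, show p+1+1 = p+2 from rfl] at hc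
  have hA := Ap_eq_Wt hσ hc.1
  have hB : Bp (sval σ) p = X 2 := if_pos ⟨hc.2, by omega⟩
  rw [hA, hB, hM_eq hσ hp, h]
  ring

lemma class4 (hσ : σ ∈ StirlingSet n) (hp : p ≤ 2*n)
    (h : Wt (sval σ) (p+1) = X 1) :
    X 0 * (Ap (sval σ) p * Bp (sval σ) p * Gp σ p)
      = X 0 * (X 0 ^ lapQ σ * X 1 ^ (dascQ σ - 1) * X 2 ^ dpQ σ) := by
  have hc := (Wt_eq_X1_iff (sval σ) (p+1)).mp h
  rw [show p+1-1 = p from rfl, show p+1+1 = p+2 from rfl] at hc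
  have hA := Ap_eq_Wt hσ hc.1
  have hB : Bp (sval σ) p = 1 := if_neg (by omega)
  have hd1 : 1 ≤ dascQ σ := by
    rw [dascQ]
    apply Finset.card_pos.mpr
    refine ⟨p+1, ?_⟩
    simp only [Finset.mem_filter, Finset.mem_Icc]
    have hbd := dasc_bounds σ (i := p+1) (by rw [show p+1-1 = p from rfl]; exact hc)
    exact ⟨⟨hbd.1, hbd.2⟩, by rw [show p+1-1 = p from rfl]; exact hc.1, hc.2⟩
  apply mul_left_cancel₀ (X_ne_zero (1 : Fin 3))
  calc X 1 * (X 0 * (Ap (sval σ) p * Bp (sval σ) p * Gp σ p))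
      = X 0 * (Wt (sval σ) p * X 1 * Gp σ p) := by rw [hA, hB]; ring
    _ = X 0 * Mo := by rw [hM_eq hσ hp, h]
    _ = X 0 * (X 0 ^ lapQ σ * X 1 ^ (dascQ σ - 1 + 1) * X 2 ^ dpQ σ) := by
        rw [show dascQ σ - 1 + 1 = dascQ σ from by omega]
    _ = X 1 * (X 0 * (X 0 ^ lapQ σ * X 1 ^ (dascQ σ - 1) * X 2 ^ dpQ σ)) := by
        rw [pow_succ]; ring

lemma class5 (hσ : σ ∈ StirlingSet n) (hp : p ≤ 2*n)
    (h1 : Wt (sval σ) p ≠ X 0) (h2 : Wt (sval σ) p ≠ X 2)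
    (h3 : Wt (sval σ) (p+1) ≠ X 0) (h4 : Wt (sval σ) (p+1) ≠ X 1) :
    X 0 * (Ap (sval σ) p * Bp (sval σ) p * Gp σ p) = X 0 * Mo := by
  have hs := (mem_stirling_iff σ).mp hσ
  have hA : Ap (sval σ) p = Wt (sval σ) p := by
    by_cases hx : sval σ (p-1) < sval σ p
    · have hb := sval_nonzero_bounds σ (i := p) (by omega)
      have hnp := no_peak hs (sval_le σ) hb.1 hb.2 hx
      have hne : sval σ p ≠ sval σ (p+1) := by
        intro hcc
        exact h1 ((Wt_eq_X0_iff (sval σ) p).mpr ⟨hx, hcc⟩)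
      rw [Ap, if_pos hx, (Wt_eq_X1_iff (sval σ) p).mpr ⟨hx, by omega⟩]
    · rw [Ap, if_neg hx]
      rw [Wt_eq_one_of _ _ (by omega) (by omega) ?_]
      intro hcc
      exact h2 ((Wt_eq_X2_iff (sval σ) p).mpr hcc)
  have hB : Bp (sval σ) p = Wt (sval σ) (p+1) := by
    by_cases hy : sval σ (p+1) = sval σ (p+2) ∧ sval σ (p+1) ≠ 0
    · rw [Bp, if_pos hy]
      have hlt : sval σ (p+1) < sval σ p := by
        rcases Nat.lt_trichotomy (sval σ p) (sval σ (p+1)) with hv | hv | hv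
        · exact absurd ((Wt_eq_X0_iff (sval σ) (p+1)).mpr
            (by rw [show p+1-1 = p from rfl, show p+1+1 = p+2 from rfl]; exact ⟨hv, hy.1⟩)) h3
        · exfalso
          exact no_triple hs (fun i hi => sval_nonzero_bounds σ hi) (sval_le σ)
            (show p < p+1 by omega) (show p+1 < p+2 by omega)
            (by omega) hv (hy.1)
        · exact hv
      rw [(Wt_eq_X2_iff (sval σ) (p+1)).mpr
        (by rw [show p+1-1 = p from rfl, show p+1+1 = p+2 from rfl]; exact ⟨hlt, hy.1, hy.2⟩)]
    · rw [Bp, if_neg hy]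
      rw [Wt_eq_one_of _ _ ?_ ?_ ?_]
      · rw [show p+1-1 = p from rfl, show p+1+1 = p+2 from rfl]
        rintro ⟨hz1, hz2⟩
        exact hy ⟨hz2, by omega⟩
      · intro hcc
        exact h4 ((Wt_eq_X1_iff (sval σ) (p+1)).mpr hcc)
      · rw [show p+1-1 = p from rfl, show p+1+1 = p+2 from rfl]
        rintro ⟨hz1, hz2, hz3⟩
        exact hy ⟨hz2, hz3⟩
  rw [hA, hB, hM_eq hσ hp]

end Classes


section SumTerm

variable {σ : Fin (2*n) → Fin (n+1)}

local notation "Mo" => X 0 ^ lapQ σ * X 1 ^ dascQ σ * X 2 ^ dpQ σ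

lemma imp_ne {p : ℕ} (h : sval σ p < sval σ (p+1)) :
    Wt (sval σ) p ≠ X 0 ∧ Wt (sval σ) p ≠ X 2 := by
  constructor
  · intro hc
    have := (Wt_eq_X0_iff (sval σ) p).mp hc
    omega
  · intro hc
    have := (Wt_eq_X2_iff (sval σ) p).mp hc
    omega

lemma card_c1 : ((range (2*n+1)).filter (fun p => Wt (sval σ) p = X 0)).card = lapQ σ := by
  rw [Finset.filter_congr (fun p _ => Wt_eq_X0_iff (sval σ) p)]
  exact card_filter_lap σ _ (fun i hi => by
    simp only [Finset.mem_Icc] at hi; simp only [Finset.mem_range]; omega)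

lemma card_c2 (hσ : σ ∈ StirlingSet n) :
    ((range (2*n+1)).filter
      (fun p => ¬(Wt (sval σ) p = X 0) ∧ Wt (sval σ) p = X 2)).card = dpQ σ := by
  rw [Finset.filter_congr (q := fun p => sval σ p < sval σ (p-1) ∧ sval σ p = sval σ (p+1) ∧ sval σ p ≠ 0)
    (fun p _ => by
      rw [← Wt_eq_X2_iff]
      constructor
      · exact And.right
      · intro h
        exact ⟨by rw [h]; exact fun hh => X02 hh.symm, h⟩)]
  exact card_filter_dp σ hσ _ (fun i hi => by
    simp only [Finset.mem_Icc] at hi; simp only [Finset.mem_range]; omega)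

lemma card_shift_one {cond : ℕ → Prop} [DecidablePred cond] {a b : ℕ}
    (hab : ∀ q, cond q → 1 ≤ q ∧ q ≤ a) (ha : a < b) :
    ((range b).filter (fun p => cond (p+1))).card = ((Icc 1 a).filter cond).card := by
  refine Finset.card_bij' (fun p _ => p + 1) (fun q _ => q - 1) ?_ ?_ ?_ ?_
  · intro p hp
    simp only [Finset.mem_filter, Finset.mem_range] at hp
    simp only [Finset.mem_filter, Finset.mem_Icc]
    exact ⟨hab _ hp.2, hp.2⟩
  · intro q hq
    simp only [Finset.mem_filter, Finset.mem_Icc] at hq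
    simp only [Finset.mem_filter, Finset.mem_range]
    constructor
    · omega
    · rw [show q - 1 + 1 = q from by omega]
      exact hq.2
  · intro p hp
    simp
  · intro q hq
    simp only [Finset.mem_filter, Finset.mem_Icc] at hq
    omega

lemma card_c3 :
    ((range (2*n+1)).filter
      (fun p => ¬(Wt (sval σ) p = X 0) ∧ ¬(Wt (sval σ) p = X 2) ∧ Wt (sval σ) (p+1) = X 0)).card
      = lapQ σ := by
  classical
  rw [Finset.filter_congr (q := fun p => (fun q => sval σ (q-1) < sval σ q ∧ sval σ q = sval σ (q+1)) (p+1))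
    (fun p _ => by
      simp only []
      rw [← Wt_eq_X0_iff]
      constructor
      · exact fun h => h.2.2
      · intro h
        have hc := (Wt_eq_X0_iff (sval σ) (p+1)).mp h
        rw [show p+1-1 = p from rfl] at hc
        exact ⟨(imp_ne hc.1).1, (imp_ne hc.1).2, h⟩)]
  rw [card_shift_one (fun q hq => lap_bounds σ hq) (by omega)]
  rfl

lemma card_c4 :
    ((range (2*n+1)).filter
      (fun p => ¬(Wt (sval σ) p = X 0) ∧ ¬(Wt (sval σ) p = X 2) ∧ ¬(Wt (sval σ) (p+1) = X 0)
         ∧ Wt (sval σ) (p+1) = X 1)).card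
      = dascQ σ := by
  classical
  rw [Finset.filter_congr (q := fun p => (fun q => sval σ (q-1) < sval σ q ∧ sval σ q < sval σ (q+1)) (p+1))
    (fun p _ => by
      simp only []
      rw [← Wt_eq_X1_iff]
      constructor
      · exact fun h => h.2.2.2
      · intro h
        have hc := (Wt_eq_X1_iff (sval σ) (p+1)).mp h
        rw [show p+1-1 = p from rfl] at hc
        exact ⟨(imp_ne hc.1).1, (imp_ne hc.1).2, by rw [h]; exact fun hh => X01 hh.symm, h⟩)]
  rw [card_shift_one (fun q hq => dasc_bounds σ hq) (by omega)]
  rfl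

open scoped Classical in
lemma sum_term (hσ : σ ∈ StirlingSet n) :
    ∃ c : ℕ, lapQ σ + dpQ σ + lapQ σ + dascQ σ + c = 2*n+1 ∧
    ∑ p ∈ range (2*n+1), (X 0 * (Ap (sval σ) p * Bp (sval σ) p * Gp σ p))
      = lapQ σ • (X 1 * Mo)
        + (dpQ σ • (X 0 * (X 0 ^ lapQ σ * X 1 ^ dascQ σ * X 2 ^ (dpQ σ - 1)))
        + (lapQ σ • (X 2 * Mo)
        + (dascQ σ • (X 0 * (X 0 ^ lapQ σ * X 1 ^ (dascQ σ - 1) * X 2 ^ dpQ σ))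
        + c • (X 0 * Mo)))) := by
  have hterm : ∀ p ∈ range (2*n+1),
      X 0 * (Ap (sval σ) p * Bp (sval σ) p * Gp σ p)
        = if Wt (sval σ) p = X 0 then X 1 * Mo
          else if Wt (sval σ) p = X 2 then
            X 0 * (X 0 ^ lapQ σ * X 1 ^ dascQ σ * X 2 ^ (dpQ σ - 1))
          else if Wt (sval σ) (p+1) = X 0 then X 2 * Mo
          else if Wt (sval σ) (p+1) = X 1 then
            X 0 * (X 0 ^ lapQ σ * X 1 ^ (dascQ σ - 1) * X 2 ^ dpQ σ)
          else X 0 * Mo := by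
    intro p hp'
    rw [Finset.mem_range] at hp'
    have hp : p ≤ 2*n := by omega
    split_ifs with h1 h2 h3 h4
    · exact class1 hσ hp h1
    · exact class2 hσ hp h2
    · exact class3 hσ hp h3
    · exact class4 hσ hp h4
    · exact class5 hσ hp h1 h2 h3 h4
  rw [Finset.sum_congr rfl hterm]
  rw [Finset.sum_ite, Finset.sum_const]
  rw [Finset.sum_ite, Finset.sum_const]
  rw [Finset.sum_ite, Finset.sum_const]
  rw [Finset.sum_ite, Finset.sum_const]
  rw [Finset.sum_const]
  simp only [Finset.filter_filter, and_assoc]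
  rw [card_c1, card_c2 hσ, card_c3, card_c4]
  refine ⟨_, ?_, rfl⟩
  have k1 := Finset.card_filter_add_card_filter_not
    (s := range (2*n+1)) (p := fun p => Wt (sval σ) p = X 0)
  have k2 := Finset.card_filter_add_card_filter_not
    (s := (range (2*n+1)).filter (fun p => ¬(Wt (sval σ) p = X 0)))
    (p := fun p => Wt (sval σ) p = X 2)
  have k3 := Finset.card_filter_add_card_filter_not
    (s := ((range (2*n+1)).filter (fun p => ¬(Wt (sval σ) p = X 0))).filter
      (fun p => ¬(Wt (sval σ) p = X 2)))
    (p := fun p => Wt (sval σ) (p+1) = X 0)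
  have k4 := Finset.card_filter_add_card_filter_not
    (s := (((range (2*n+1)).filter (fun p => ¬(Wt (sval σ) p = X 0))).filter
      (fun p => ¬(Wt (sval σ) p = X 2))).filter
      (fun p => ¬(Wt (sval σ) (p+1) = X 0)))
    (p := fun p => Wt (sval σ) (p+1) = X 1)
  simp only [Finset.filter_filter, and_assoc] at k2 k3 k4
  rw [Finset.card_range] at k1
  rw [card_c1] at k1
  rw [card_c2 hσ] at k2
  rw [card_c3] at k3
  rw [card_c4] at k4
  omega

end SumTerm


section Pderiv

lemma pderiv0_M (l d e : ℕ) :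
    pderiv 0 (X 0^l * X 1^d * X 2^e : MvPolynomial (Fin 3) ℚ)
      = (l : MvPolynomial (Fin 3) ℚ) * X 0^(l-1) * X 1^d * X 2^e := by
  rw [pderiv_mul, pderiv_mul]
  rw [(pderiv 0).leibniz_pow, (pderiv 0).leibniz_pow, (pderiv 0).leibniz_pow]
  rw [pderiv_X_self, pderiv_X_of_ne (show (1 : Fin 3) ≠ 0 by decide),
    pderiv_X_of_ne (show (2 : Fin 3) ≠ 0 by decide)]
  simp only [smul_zero, mul_zero, add_zero, zero_add, smul_eq_mul, mul_one, nsmul_eq_mul]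
  try ring

lemma pderiv1_M (l d e : ℕ) :
    pderiv 1 (X 0^l * X 1^d * X 2^e : MvPolynomial (Fin 3) ℚ)
      = (d : MvPolynomial (Fin 3) ℚ) * X 0^l * X 1^(d-1) * X 2^e := by
  rw [pderiv_mul, pderiv_mul]
  rw [(pderiv 1).leibniz_pow, (pderiv 1).leibniz_pow, (pderiv 1).leibniz_pow]
  rw [pderiv_X_self, pderiv_X_of_ne (show (0 : Fin 3) ≠ 1 by decide),
    pderiv_X_of_ne (show (2 : Fin 3) ≠ 1 by decide)]
  simp only [smul_zero, mul_zero, add_zero, zero_add, smul_eq_mul, mul_one, nsmul_eq_mul]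
  try ring

lemma pderiv2_M (l d e : ℕ) :
    pderiv 2 (X 0^l * X 1^d * X 2^e : MvPolynomial (Fin 3) ℚ)
      = (e : MvPolynomial (Fin 3) ℚ) * X 0^l * X 1^d * X 2^(e-1) := by
  rw [pderiv_mul, pderiv_mul]
  rw [(pderiv 2).leibniz_pow, (pderiv 2).leibniz_pow, (pderiv 2).leibniz_pow]
  rw [pderiv_X_self, pderiv_X_of_ne (show (0 : Fin 3) ≠ 2 by decide),
    pderiv_X_of_ne (show (1 : Fin 3) ≠ 2 by decide)]
  simp only [smul_zero, mul_zero, add_zero, zero_add, smul_eq_mul, mul_one, nsmul_eq_mul]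
  try ring

lemma absorb (a : MvPolynomial (Fin 3) ℚ) (k : ℕ) :
    (k : MvPolynomial (Fin 3) ℚ) * (a * a^(k-1)) = (k : MvPolynomial (Fin 3) ℚ) * a^k := by
  cases k with
  | zero => simp
  | succ m =>
    rw [Nat.succ_sub_one, ← pow_succ']

end Pderiv

section PerSigma

variable {σ : Fin (2*n) → Fin (n+1)}

local notation "Mo" => X 0 ^ lapQ σ * X 1 ^ dascQ σ * X 2 ^ dpQ σ

lemma per_sigma (hσ : σ ∈ StirlingSet n) :
    ∑ p ∈ range (2*n+1), (X 0 * (Ap (sval σ) p * Bp (sval σ) p * Gp σ p))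
      = ((2*n+1 : ℕ) : MvPolynomial (Fin 3) ℚ) * X 0 * Mo
        + (X 0*X 1 + X 0*X 2 - 2*X 0^2) * pderiv 0 Mo
        + X 0*(1 - X 1) * pderiv 1 Mo + X 0*(1 - X 2) * pderiv 2 Mo := by
  obtain ⟨c, hc, hsum⟩ := sum_term hσ
  rw [hsum, pderiv0_M, pderiv1_M, pderiv2_M]
  simp only [nsmul_eq_mul]
  have hc' : (c : MvPolynomial (Fin 3) ℚ)
      = ((2*n+1 : ℕ) : MvPolynomial (Fin 3) ℚ)
        - 2*(lapQ σ : MvPolynomial (Fin 3) ℚ) - (dascQ σ : MvPolynomial (Fin 3) ℚ)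
        - (dpQ σ : MvPolynomial (Fin 3) ℚ) := by
    have hcast := congrArg (Nat.cast : ℕ → MvPolynomial (Fin 3) ℚ) hc
    push_cast at hcast ⊢
    linear_combination hcast
  have a0 := absorb (X 0 : MvPolynomial (Fin 3) ℚ) (lapQ σ)
  have a1 := absorb (X 1 : MvPolynomial (Fin 3) ℚ) (dascQ σ)
  have a2 := absorb (X 2 : MvPolynomial (Fin 3) ℚ) (dpQ σ)
  linear_combination (X 0 * (X 0 ^ lapQ σ * X 1 ^ dascQ σ * X 2 ^ dpQ σ)) * hc'
    + (2*X 0*X 1 ^ dascQ σ*X 2 ^ dpQ σ - X 1 ^ (dascQ σ+1)*X 2 ^ dpQ σ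
       - X 1 ^ dascQ σ*X 2 ^ (dpQ σ+1)) * a0
    + (X 0 ^ (lapQ σ+1) * X 2 ^ dpQ σ) * a1
    + (X 0 ^ (lapQ σ+1) * X 1 ^ dascQ σ) * a2

end PerSigma

end St11

theorem statement_11 (n : ℕ) :
    Ppoly (n + 1) =
      ((2 * n + 1 : ℕ) : MvPolynomial (Fin 3) ℚ) * X 0 * Ppoly n +
        (X 0 * X 1 + X 0 * X 2 - 2 * X 0 ^ 2) * pderiv 0 (Ppoly n) +
        X 0 * (1 - X 1) * pderiv 1 (Ppoly n) +
        X 0 * (1 - X 2) * pderiv 2 (Ppoly n) := by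
  have key : Ppoly (n+1) = ∑ σ ∈ StirlingSet n,
      (((2*n+1 : ℕ) : MvPolynomial (Fin 3) ℚ) * X 0
          * (X 0 ^ lapQ σ * X 1 ^ dascQ σ * X 2 ^ dpQ σ)
        + (X 0*X 1 + X 0*X 2 - 2*X 0^2)
          * pderiv 0 (X 0 ^ lapQ σ * X 1 ^ dascQ σ * X 2 ^ dpQ σ)
        + X 0*(1 - X 1) * pderiv 1 (X 0 ^ lapQ σ * X 1 ^ dascQ σ * X 2 ^ dpQ σ)
        + X 0*(1 - X 2) * pderiv 2 (X 0 ^ lapQ σ * X 1 ^ dascQ σ * X 2 ^ dpQ σ)) := by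
    rw [Ppoly]
    rw [← St11.sum_ins_eq (fun τ => X 0 ^ lapQ τ * X 1 ^ dascQ τ * X 2 ^ dpQ τ)]
    rw [Finset.sum_product]
    apply Finset.sum_congr rfl
    intro σ hσ
    rw [← St11.per_sigma hσ]
    apply Finset.sum_congr rfl
    intro p hp
    rw [Finset.mem_range] at hp
    have hp' : p ≤ 2*n := by omega
    show X 0 ^ lapQ (St11.ins σ p) * X 1 ^ dascQ (St11.ins σ p) * X 2 ^ dpQ (St11.ins σ p) = _
    rw [St11.mono_eq_prod _ (St11.ins_mem hσ hp')]
    exact St11.prod_ins_eq hp'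
  rw [key]
  conv_rhs => rw [Ppoly]
  rw [map_sum, map_sum, map_sum]
  rw [Finset.mul_sum, Finset.mul_sum, Finset.mul_sum, Finset.mul_sum]
  rw [← Finset.sum_add_distrib, ← Finset.sum_add_distrib, ← Finset.sum_add_distrib]
end

section
/- Let P_n(i,j,k) be the number of Stirling permutations σ ∈ Q_n with lap(σ) = i, dasc(σ) = j and dp(σ) = k (set to 0 when any index is negative). Then for all n ≥ 0 and all integers i, j, k ≥ 0, P_{n+1}(i,j,k) = i·P_n(i,j−1,k) + i·P_n(i,j,k−1) + (j+1)·P_n(i−1,j+1,k) + (k+1)·P_n(i−1,j,k+1) + (2n+3−2i−j−k)·P_n(i−1,j,k), as an identity of integers. -/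
open Finset MvPolynomial

/-- `P_n(i,j,k)`: the number of Stirling permutations of order `n` with `lap = i`,
`dasc = j` and `dp = k`, extended by `0` when some index is negative. -/
def Pnum (n : ℕ) (i j k : ℤ) : ℤ :=
  if 0 ≤ i ∧ 0 ≤ j ∧ 0 ≤ k then
    ((StirlingSet n).filter
      (fun σ => (lapQ σ : ℤ) = i ∧ (dascQ σ : ℤ) = j ∧ (dpQ σ : ℤ) = k)).card
  else 0

/-!
We read a Stirling permutation `σ` of order `n` as the word `sval σ : ℕ → ℕ` (letters at
positions `1, …, 2n`, zeros elsewhere); `lap`, `dasc` and `dp` count occurrences of three-letter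
patterns in it.

The two copies of the largest letter `n + 1` of a Stirling permutation of order `n + 1` are
adjacent, so deleting them is a bijection onto pairs (Stirling permutation of order `n`, gap
`g ∈ {0, …, 2n}`). Inserting the plateau `(n+1)(n+1)` after position `g` only changes the
patterns around `g`: if `σ_{g-1} < σ_g = σ_{g+1}` then `dasc` grows by one; if
`σ_g < σ_{g+1} = σ_{g+2}` then `dp` grows; if `σ_g < σ_{g+1} < σ_{g+2}` then `lap` grows and
`dasc` drops; if `σ_{g-1} > σ_g = σ_{g+1}` then `lap` grows and `dp` drops; otherwise only `lap`
grows. Two facts about Stirling permutations make this exact: a letter reached by an ascent is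
never followed by a smaller letter, and no letter occurs three times in a row. The four special
kinds of gaps occur `lap`, `lap`, `dasc` and `dp` times, so `2n + 1 - 2 lap - dasc - dp` gaps are
of the last kind, and summing over all `σ` gives the recurrence.
-/

lemma mul_ite_add_eq {G R : Type*} [AddGroup G] [DecidableEq G] [MulZeroOneClass R]
    {S s v : G} {c c' : R} (h : S = v - s → c = c') :
    c * (if S + s = v then 1 else 0) = c' * if S = v - s then 1 else 0 := by
  simp only [← eq_sub_iff_add_eq]
  split_ifs with hS
  · rw [h hS]
  · simp

structure IsStirlingWord (n : ℕ) (w : ℕ → ℕ) : Prop where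
  eq_zero_iff : ∀ t, w t = 0 ↔ t = 0 ∨ 2 * n < t
  le : ∀ t, w t ≤ n
  card_eq_two : ∀ v, 0 < v → v ≤ n → #{t ∈ range (2 * n + 1) | w t = v} = 2
  lt_of_eq : ∀ a b c, a < b → b < c → 0 < w a → w a = w c → w a < w b

namespace IsStirlingWord

variable {n : ℕ} {w : ℕ → ℕ}

lemma pos (hw : IsStirlingWord n w) {t : ℕ} (h1 : 1 ≤ t) (h2 : t ≤ 2 * n) : 0 < w t := by
  have := hw.eq_zero_iff t
  omega

lemma exists_ne_eq (hw : IsStirlingWord n w) {t : ℕ} (ht : 0 < w t) :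
    ∃ s, s ≠ t ∧ w s = w t := by
  have ht' : t < 2 * n + 1 := by have := hw.eq_zero_iff t; omega
  have hcard := hw.card_eq_two (w t) ht (hw.le t)
  obtain ⟨s, hs, hst⟩ := exists_mem_ne (s := {s ∈ range (2 * n + 1) | w s = w t})
    (by omega) t
  exact ⟨s, hst, (mem_filter.mp hs).2⟩

lemma not_triple (hw : IsStirlingWord n w) {t : ℕ} (ht : 0 < w t) :
    ¬ (w t = w (t + 1) ∧ w (t + 1) = w (t + 2)) := by
  rintro ⟨h, h'⟩
  have ht2 : t + 2 ≤ 2 * n := by have := hw.eq_zero_iff (t + 2); omega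
  have hsub : {t, t + 1, t + 2} ⊆ {s ∈ range (2 * n + 1) | w s = w t} := by
    intro s hs
    simp only [mem_insert, mem_singleton] at hs
    rcases hs with rfl | rfl | rfl <;> rw [mem_filter, mem_range] <;> omega
  have := card_le_card hsub
  rw [hw.card_eq_two _ ht (hw.le t), card_insert_of_notMem (by simp), card_pair (by omega)] at this
  omega

lemma not_peak (hw : IsStirlingWord n w) (t : ℕ) : ¬ (w (t - 1) < w t ∧ w (t + 1) < w t) := by
  rintro ⟨h, h'⟩
  obtain ⟨s, hst, hs⟩ := hw.exists_ne_eq (t := t) (by omega)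
  rcases lt_or_gt_of_ne hst with hlt | hlt
  · by_cases hs1 : s = t - 1
    · subst hs1; omega
    · have := hw.lt_of_eq s (t - 1) t (by omega) (by omega) (by omega) hs
      omega
  · by_cases hs1 : s = t + 1
    · subst hs1; omega
    · have := hw.lt_of_eq t (t + 1) s (by omega) (by omega) (by omega) hs.symm
      omega

lemma lt_succ (hw : IsStirlingWord n w) (s : ℕ) : w s < n + 1 :=
  Nat.lt_succ_of_le (hw.le s)

end IsStirlingWord

section Insertion

def insertPair (w : ℕ → ℕ) (m g : ℕ) (t : ℕ) : ℕ :=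
  if t ≤ g then w t else if t ≤ g + 2 then m else w (t - 2)

def liftIndex (g s : ℕ) : ℕ := if s ≤ g then s else s + 2

variable {w : ℕ → ℕ} {m g : ℕ}

lemma insertPair_of_le {t : ℕ} (h : t ≤ g) : insertPair w m g t = w t := if_pos h

lemma insertPair_of_mem_Ioc {t : ℕ} (h₁ : g < t) (h₂ : t ≤ g + 2) : insertPair w m g t = m := by
  rw [insertPair, if_neg (by omega), if_pos h₂]

lemma insertPair_of_lt {t : ℕ} (h : g + 2 < t) : insertPair w m g t = w (t - 2) := by
  rw [insertPair, if_neg (by omega), if_neg (by omega)]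

lemma insertPair_liftIndex (s : ℕ) : insertPair w m g (liftIndex g s) = w s := by
  unfold liftIndex
  split_ifs with h
  · exact insertPair_of_le h
  · rw [insertPair_of_lt (by omega), Nat.add_sub_cancel]

lemma liftIndex_strictMono : StrictMono (liftIndex g) := by
  intro s s' h
  unfold liftIndex
  split_ifs <;> omega

lemma exists_liftIndex_eq {t : ℕ} (h : t ≤ g ∨ g + 2 < t) : ∃ s, liftIndex g s = t := by
  refine ⟨if t ≤ g then t else t - 2, ?_⟩
  unfold liftIndex
  split_ifs <;> omega

lemma insertPair_eq_iff (hw : ∀ s, w s < m) {t : ℕ} :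
    insertPair w m g t = m ↔ g < t ∧ t ≤ g + 2 := by
  unfold insertPair
  split_ifs with h₁ h₂
  · exact ⟨fun h => absurd h (hw t).ne, by omega⟩
  · exact ⟨fun _ => ⟨by omega, h₂⟩, fun _ => rfl⟩
  · exact ⟨fun h => absurd h (hw _).ne, by omega⟩

lemma insertPair_comp_liftIndex : insertPair w m g ∘ liftIndex g = w :=
  funext insertPair_liftIndex

lemma insertPair_comp_liftIndex_eq_self {τ : ℕ → ℕ} (h₁ : τ (g + 1) = m) (h₂ : τ (g + 2) = m) :
    insertPair (τ ∘ liftIndex g) m g = τ := by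
  funext t
  unfold insertPair
  split_ifs with h h'
  · simp [liftIndex, h]
  · obtain rfl | rfl : t = g + 1 ∨ t = g + 2 := by omega
    exacts [h₁.symm, h₂.symm]
  · simp only [Function.comp, liftIndex, if_neg (show ¬ t - 2 ≤ g by omega)]
    congr 1
    omega

lemma sum_range_insertPair {M : Type*} [AddCommMonoid M] (F : ℕ → M) (r : ℕ) :
    ∑ t ∈ range (g + 3 + r), F (insertPair w m g t) =
      ∑ t ∈ range (g + 1 + r), F (w t) + 2 • F m := by
  rw [show g + 3 + r = g + 1 + 2 + r by omega, sum_range_add _ (g + 1 + 2), sum_range_add _ (g + 1),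
    sum_range_add _ (g + 1) r]
  have hlow : ∑ t ∈ range (g + 1), F (insertPair w m g t) = ∑ t ∈ range (g + 1), F (w t) :=
    sum_congr rfl fun t ht => by rw [insertPair_of_le (by simp at ht; omega)]
  have hhigh : ∑ k ∈ range r, F (insertPair w m g (g + 1 + 2 + k)) =
      ∑ k ∈ range r, F (w (g + 1 + k)) :=
    sum_congr rfl fun k _ => by rw [insertPair_of_lt (by omega)]; congr 2; omega
  have hmid : ∑ k ∈ range 2, F (insertPair w m g (g + 1 + k)) = 2 • F m := by
    rw [sum_range_succ, sum_range_one, insertPair_of_mem_Ioc (by omega) (by omega),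
      insertPair_of_mem_Ioc (by omega) (by omega), two_nsmul]
  rw [hlow, hmid, hhigh]
  abel

lemma card_filter_insertPair_eq (r v : ℕ) :
    #{t ∈ range (g + 3 + r) | insertPair w m g t = v} =
      #{t ∈ range (g + 1 + r) | w t = v} + if m = v then 2 else 0 := by
  simp only [card_filter]
  rw [sum_range_insertPair (fun x => if x = v then 1 else 0), smul_ite, smul_zero, smul_eq_mul,
    mul_one]

lemma insertPair_inj {w' : ℕ → ℕ} {g' : ℕ} (hw : ∀ s, w s < m) (hw' : ∀ s, w' s < m)
    (h : insertPair w m g = insertPair w' m g') : w = w' ∧ g = g' := by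
  have h₁ := congrFun h (g + 1)
  have h₂ := congrFun h (g' + 1)
  rw [insertPair_of_mem_Ioc (w := w) (by omega) (by omega), eq_comm, insertPair_eq_iff hw'] at h₁
  rw [insertPair_of_mem_Ioc (w := w') (by omega) (by omega), insertPair_eq_iff hw] at h₂
  obtain rfl : g = g' := by omega
  rw [← insertPair_comp_liftIndex (w := w) (m := m) (g := g), h, insertPair_comp_liftIndex]
  exact ⟨rfl, rfl⟩

end Insertion

namespace IsStirlingWord

variable {n g : ℕ}

lemma insertPair_succ {w : ℕ → ℕ} (hw : IsStirlingWord n w) (hg : g ≤ 2 * n) :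
    IsStirlingWord (n + 1) (insertPair w (n + 1) g) where
  eq_zero_iff t := by
    rcases (show t ≤ g ∨ (g < t ∧ t ≤ g + 2) ∨ g + 2 < t by omega) with h | ⟨h₁, h₂⟩ | h
    · rw [insertPair_of_le h, hw.eq_zero_iff]; omega
    · rw [insertPair_of_mem_Ioc h₁ h₂]; omega
    · rw [insertPair_of_lt h, hw.eq_zero_iff]; omega
  le t := by
    unfold insertPair
    split_ifs
    · exact Nat.le_succ_of_le (hw.le t)
    · exact le_rfl
    · exact Nat.le_succ_of_le (hw.le _)
  card_eq_two v hv hvn := by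
    rw [show 2 * (n + 1) + 1 = g + 3 + (2 * n - g) by omega, card_filter_insertPair_eq,
      show g + 1 + (2 * n - g) = 2 * n + 1 by omega]
    rcases (show v ≤ n ∨ v = n + 1 by omega) with hv' | rfl
    · rw [hw.card_eq_two v hv hv', if_neg (by omega)]
    · rw [if_pos rfl, filter_false_of_mem fun t _ => (hw.lt_succ t).ne, card_empty]
  lt_of_eq a b c hab hbc ha hac := by
    have hmid : ∀ t, insertPair w (n + 1) g t = n + 1 ↔ g < t ∧ t ≤ g + 2 :=
      fun t => insertPair_eq_iff hw.lt_succ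
    by_cases hm : insertPair w (n + 1) g a = n + 1
    · have := (hmid a).mp hm
      have := (hmid c).mp (hac ▸ hm)
      omega
    have hna : ¬ (g < a ∧ a ≤ g + 2) := fun h => hm ((hmid a).mpr h)
    have hnc : ¬ (g < c ∧ c ≤ g + 2) := fun h => hm (hac.trans ((hmid c).mpr h))
    obtain ⟨a, rfl⟩ := exists_liftIndex_eq (g := g) (t := a) (by omega)
    obtain ⟨c, rfl⟩ := exists_liftIndex_eq (g := g) (t := c) (by omega)
    by_cases hbm : g < b ∧ b ≤ g + 2
    · rw [insertPair_of_mem_Ioc hbm.1 hbm.2, insertPair_liftIndex]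
      exact hw.lt_succ a
    obtain ⟨b, rfl⟩ := exists_liftIndex_eq (g := g) (t := b) (by omega)
    rw [insertPair_liftIndex, insertPair_liftIndex] at *
    exact hw.lt_of_eq a b c (liftIndex_strictMono.lt_iff_lt.mp hab)
      (liftIndex_strictMono.lt_iff_lt.mp hbc) ha hac

lemma comp_liftIndex {τ : ℕ → ℕ} (hτ : IsStirlingWord (n + 1) τ) (hg : g ≤ 2 * n)
    (h₁ : τ (g + 1) = n + 1) (h₂ : τ (g + 2) = n + 1) : IsStirlingWord n (τ ∘ liftIndex g) := by
  have hcard (v : ℕ) : #{t ∈ range (2 * n + 1) | (τ ∘ liftIndex g) t = v} +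
      (if n + 1 = v then 2 else 0) = #{t ∈ range (2 * (n + 1) + 1) | τ t = v} := by
    have key := card_filter_insertPair_eq (w := τ ∘ liftIndex g) (m := n + 1) (g := g) (2 * n - g) v
    simp only [insertPair_comp_liftIndex_eq_self h₁ h₂] at key
    rw [show 2 * (n + 1) + 1 = g + 3 + (2 * n - g) by omega, key,
      show g + 1 + (2 * n - g) = 2 * n + 1 by omega]
  have eq_zero_iff (t : ℕ) : (τ ∘ liftIndex g) t = 0 ↔ t = 0 ∨ 2 * n < t := by
    rw [Function.comp_apply, hτ.eq_zero_iff, liftIndex]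
    rcases le_or_gt t g with h | h
    · rw [if_pos h]; omega
    · rw [if_neg (by omega)]; omega
  refine ⟨eq_zero_iff, fun t => ?_, fun v hv hvn => ?_, fun a b c hab hbc ha hac => ?_⟩
  · by_cases ht : 2 * n < t
    · exact ((eq_zero_iff t).mpr (Or.inr ht)).le.trans (Nat.zero_le n)
    have hzero := hcard (n + 1)
    rw [hτ.card_eq_two (n + 1) n.succ_pos le_rfl, if_pos rfl, add_eq_right, card_eq_zero,
      filter_eq_empty_iff] at hzero
    have := hzero (x := t) (mem_range.mpr (by omega))
    have : (τ ∘ liftIndex g) t ≤ n + 1 := hτ.le _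
    omega
  · have := hcard v
    rwa [hτ.card_eq_two v hv (Nat.le_succ_of_le hvn), if_neg (by omega), add_zero] at this
  · exact hτ.lt_of_eq _ _ _ (liftIndex_strictMono hab) (liftIndex_strictMono hbc) ha hac

lemma exists_max_plateau {τ : ℕ → ℕ} (hτ : IsStirlingWord (n + 1) τ) :
    ∃ g ≤ 2 * n, τ (g + 1) = n + 1 ∧ τ (g + 2) = n + 1 := by
  have adjacent {p q : ℕ} (hpq : p < q) (hp : τ p = n + 1) (hq : τ q = n + 1) :
      ∃ g ≤ 2 * n, τ (g + 1) = n + 1 ∧ τ (g + 2) = n + 1 := by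
    have hp0 := hτ.eq_zero_iff p
    have hq0 := hτ.eq_zero_iff q
    obtain rfl : q = p + 1 := by
      by_contra hne
      have := hτ.lt_of_eq p (p + 1) q (by omega) (by omega) (by omega) (hp.trans hq.symm)
      have := hτ.le (p + 1)
      omega
    exact ⟨p - 1, by omega, by rwa [Nat.sub_add_cancel (by omega)],
      by rwa [show p - 1 + 2 = p + 1 by omega]⟩
  obtain ⟨p, hp, q, hq, hpq⟩ := one_lt_card.mp
    (hτ.card_eq_two (n + 1) (by omega) le_rfl ▸ one_lt_two)
  rw [mem_filter] at hp hq
  rcases lt_or_gt_of_ne hpq with h | h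
  exacts [adjacent h hp.2 hq.2, adjacent h hq.2 hp.2]

end IsStirlingWord

section Transfer

variable {n : ℕ}

lemma sval_eq_zero (σ : Fin (2 * n) → Fin (n + 1)) {t : ℕ} (h : t = 0 ∨ 2 * n < t) :
    sval σ t = 0 := by
  rw [sval, dif_neg (by omega)]

lemma sval_of_mem (σ : Fin (2 * n) → Fin (n + 1)) {t : ℕ} (h₁ : 1 ≤ t) (h₂ : t ≤ 2 * n) :
    sval σ t = σ ⟨t - 1, by omega⟩ := by
  rw [sval, dif_pos ⟨h₁, h₂⟩]

lemma sval_succ (σ : Fin (2 * n) → Fin (n + 1)) (p : Fin (2 * n)) : sval σ (p + 1) = σ p := by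
  rw [sval_of_mem σ (by omega) p.isLt]
  rfl

lemma sval_le (σ : Fin (2 * n) → Fin (n + 1)) (t : ℕ) : sval σ t ≤ n := by
  unfold sval
  split_ifs
  exacts [Fin.is_le _, Nat.zero_le n]

lemma sval_injective : Function.Injective (sval (n := n)) := by
  intro σ σ' h
  funext p
  exact Fin.ext (by rw [← sval_succ, ← sval_succ, h])

lemma card_filter_eq_card_filter_sval (σ : Fin (2 * n) → Fin (n + 1)) {v : Fin (n + 1)}
    (hv : (v : ℕ) ≠ 0) : #{p | σ p = v} = #{t ∈ range (2 * n + 1) | sval σ t = v} := by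
  rw [card_filter, card_filter, sum_range_succ', sval_eq_zero σ (Or.inl rfl), if_neg hv.symm,
    add_zero, ← Fin.sum_univ_eq_sum_range (fun t => if sval σ (t + 1) = v then 1 else 0)]
  simp only [sval_succ, Fin.val_inj]

lemma ne_zero_of_mem_stirlingSet {σ : Fin (2 * n) → Fin (n + 1)} (hσ : σ ∈ StirlingSet n)
    (p : Fin (2 * n)) : σ p ≠ 0 := by
  have htwo := (mem_filter.mp hσ).2.1
  have htotal : #(univ : Finset (Fin (2 * n))) = ∑ v : Fin (n + 1), #{q | σ q = v} :=
    card_eq_sum_card_fiberwise fun _ _ => mem_coe.mpr (mem_univ _)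
  rw [Fin.sum_univ_succ, sum_congr rfl fun v _ => htwo v.succ (by simp)] at htotal
  simp only [card_univ, Fintype.card_fin, sum_const, smul_eq_mul, mul_comm] at htotal
  intro h
  have : 0 < #{q | σ q = 0} := card_pos.mpr ⟨p, by simp [h]⟩
  omega

lemma isStirlingWord_sval_iff {σ : Fin (2 * n) → Fin (n + 1)} :
    IsStirlingWord n (sval σ) ↔ σ ∈ StirlingSet n := by
  constructor
  · intro hw
    refine mem_filter.mpr ⟨mem_univ σ, fun v hv => ?_, fun i j k hij hjk hik => ?_⟩
    · rw [card_filter_eq_card_filter_sval σ hv]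
      exact hw.card_eq_two v (Nat.pos_of_ne_zero hv) (Fin.is_le v)
    · have := hw.lt_of_eq (i + 1) (j + 1) (k + 1) (by omega) (by omega)
        (hw.pos (by omega) (by omega)) (by rw [sval_succ, sval_succ, hik])
      rwa [sval_succ, sval_succ] at this
  · intro hσ
    have hsval_pos {t : ℕ} (h₁ : 1 ≤ t) (h₂ : t ≤ 2 * n) : 0 < sval σ t := by
      rw [sval_of_mem σ h₁ h₂]
      exact Nat.pos_of_ne_zero (Fin.val_ne_zero_iff.mpr (ne_zero_of_mem_stirlingSet hσ _))
    have hsupp {t : ℕ} (h : 0 < sval σ t) : 1 ≤ t ∧ t ≤ 2 * n := by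
      by_contra h'
      exact h.ne' (sval_eq_zero σ (by omega))
    refine ⟨fun t => ?_, sval_le σ, fun v hv hvn => ?_, fun a b c hab hbc ha hac => ?_⟩
    · by_cases ht : t = 0 ∨ 2 * n < t
      · exact iff_of_true (sval_eq_zero σ ht) ht
      · exact iff_of_false (hsval_pos (by omega) (by omega)).ne' ht
    · have := (mem_filter.mp hσ).2.1 ⟨v, by omega⟩ hv.ne'
      rwa [card_filter_eq_card_filter_sval σ hv.ne'] at this
    · obtain ⟨ha₁, -⟩ := hsupp ha
      obtain ⟨-, hc₂⟩ := hsupp (hac ▸ ha)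
      rw [sval_of_mem σ ha₁ (by omega), sval_of_mem σ (by omega) hc₂] at hac
      rw [sval_of_mem σ ha₁ (by omega), sval_of_mem σ (by omega) (by omega)]
      exact (mem_filter.mp hσ).2.2 _ _ _ (Fin.mk_lt_mk.mpr (by omega)) (Fin.mk_lt_mk.mpr (by omega))
        (Fin.ext hac)

lemma IsStirlingWord.exists_sval_eq {w : ℕ → ℕ} (hw : IsStirlingWord n w) :
    ∃ σ : Fin (2 * n) → Fin (n + 1), sval σ = w := by
  refine ⟨fun p => ⟨w (p + 1), Nat.lt_succ_of_le (hw.le _)⟩, funext fun t => ?_⟩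
  by_cases ht : 1 ≤ t ∧ t ≤ 2 * n
  · rw [sval_of_mem _ ht.1 ht.2]
    simp only
    congr 1
    omega
  · rw [sval_eq_zero _ (by omega), eq_comm, hw.eq_zero_iff]
    omega

def stirlingWords (n : ℕ) : Finset (ℕ → ℕ) :=
  (StirlingSet n).map ⟨sval, sval_injective⟩

lemma mem_stirlingWords {w : ℕ → ℕ} : w ∈ stirlingWords n ↔ IsStirlingWord n w := by
  constructor
  · rintro hw
    obtain ⟨σ, hσ, rfl⟩ := mem_map.mp hw
    exact isStirlingWord_sval_iff.mpr hσ
  · intro hw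
    obtain ⟨σ, rfl⟩ := hw.exists_sval_eq
    exact mem_map_of_mem _ (isStirlingWord_sval_iff.mp hw)

end Transfer

lemma card_filter_stirlingWords_succ (n : ℕ) (P : (ℕ → ℕ) → Prop) [DecidablePred P] :
    #{τ ∈ stirlingWords (n + 1) | P τ} =
      ∑ w ∈ stirlingWords n, #{g ∈ range (2 * n + 1) | P (insertPair w (n + 1) g)} := by
  have hprod : ∑ w ∈ stirlingWords n, #{g ∈ range (2 * n + 1) | P (insertPair w (n + 1) g)} =
      #{x ∈ stirlingWords n ×ˢ range (2 * n + 1) | P (insertPair x.1 (n + 1) x.2)} := by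
    simp only [card_filter, sum_product]
  rw [hprod]
  symm
  refine card_bij (fun x _ => insertPair x.1 (n + 1) x.2) ?_ ?_ ?_
  · rintro ⟨w, g⟩ hx
    simp only [mem_filter, mem_product, mem_range, mem_stirlingWords] at hx ⊢
    exact ⟨hx.1.1.insertPair_succ (by omega), hx.2⟩
  · rintro ⟨w, g⟩ hx ⟨w', g'⟩ hx' h
    simp only [mem_filter, mem_product, mem_stirlingWords] at hx hx'
    obtain ⟨rfl, rfl⟩ := insertPair_inj hx.1.1.lt_succ hx'.1.1.lt_succ h
    rfl
  · intro τ hτ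
    rw [mem_filter, mem_stirlingWords] at hτ
    obtain ⟨g, hg, h₁, h₂⟩ := hτ.1.exists_max_plateau
    refine ⟨(τ ∘ liftIndex g, g), ?_, insertPair_comp_liftIndex_eq_self h₁ h₂⟩
    simp only [mem_filter, mem_product, mem_range, mem_stirlingWords,
      insertPair_comp_liftIndex_eq_self h₁ h₂]
    exact ⟨⟨hτ.1.comp_liftIndex hg h₁ h₂, by omega⟩, hτ.2⟩

section Patterns

def lapPattern (a b c : ℕ) : Prop := a < b ∧ b = c

def dascPattern (a b c : ℕ) : Prop := a < b ∧ b < c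

/-- The condition `0 < b` excludes the plateau formed by the zeros that `sval` puts after the
last letter. -/
def dpPattern (a b c : ℕ) : Prop := b < a ∧ b = c ∧ 0 < b

instance (a b c : ℕ) : Decidable (lapPattern a b c) := inferInstanceAs (Decidable (_ ∧ _))
instance (a b c : ℕ) : Decidable (dascPattern a b c) := inferInstanceAs (Decidable (_ ∧ _))
instance (a b c : ℕ) : Decidable (dpPattern a b c) := inferInstanceAs (Decidable (_ ∧ _))

lemma lapPattern_pos {a b c : ℕ} (h : lapPattern a b c) : 0 < b ∧ 0 < c := by
  unfold lapPattern at h; omega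

lemma dascPattern_pos {a b c : ℕ} (h : dascPattern a b c) : 0 < b ∧ 0 < c := by
  unfold dascPattern at h; omega

lemma dpPattern_pos {a b c : ℕ} (h : dpPattern a b c) : 0 < b ∧ 0 < c := by
  unfold dpPattern at h; omega

variable (p : ℕ → ℕ → ℕ → Prop) [∀ a b c, Decidable (p a b c)]

def PatternAt (w : ℕ → ℕ) (t : ℕ) : Prop := p (w (t - 1)) (w t) (w (t + 1))

instance (w : ℕ → ℕ) (t : ℕ) : Decidable (PatternAt p w t) :=
  inferInstanceAs (Decidable (p _ _ _))

def patternCount (w : ℕ → ℕ) (M : ℕ) : ℕ := #{t ∈ range M | PatternAt p w t}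

lemma patternCount_insertPair (w : ℕ → ℕ) (m g r : ℕ) :
    patternCount p (insertPair w m g) (g + 4 + r) +
        ((if PatternAt p w g then 1 else 0) + if PatternAt p w (g + 1) then 1 else 0) =
      patternCount p w (g + 2 + r) +
        ((if p (w (g - 1)) (w g) m then 1 else 0) + (if p (w g) m m then 1 else 0) +
          (if p m m (w (g + 1)) then 1 else 0) + if p m (w (g + 1)) (w (g + 2)) then 1 else 0) := by
  have hlow : ∀ t ∈ range g, PatternAt p (insertPair w m g) t ↔ PatternAt p w t := by
    intro t ht
    rw [mem_range] at ht
    simp only [PatternAt, insertPair_of_le (show t - 1 ≤ g by omega),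
      insertPair_of_le (show t ≤ g by omega), insertPair_of_le (show t + 1 ≤ g by omega)]
  have hhigh : ∀ k ∈ range r,
      PatternAt p (insertPair w m g) (g + 4 + k) ↔ PatternAt p w (g + 2 + k) := by
    intro k _
    simp only [PatternAt, insertPair_of_lt (show g + 2 < g + 4 + k - 1 by omega),
      insertPair_of_lt (show g + 2 < g + 4 + k by omega),
      insertPair_of_lt (show g + 2 < g + 4 + k + 1 by omega)]
    rw [show g + 4 + k - 1 - 2 = g + 2 + k - 1 by omega, show g + 4 + k - 2 = g + 2 + k by omega,
      show g + 4 + k + 1 - 2 = g + 2 + k + 1 by omega]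
  have hwindow : PatternAt p (insertPair w m g) g = p (w (g - 1)) (w g) m ∧
      PatternAt p (insertPair w m g) (g + 1) = p (w g) m m ∧
      PatternAt p (insertPair w m g) (g + 2) = p m m (w (g + 1)) ∧
      PatternAt p (insertPair w m g) (g + 3) = p m (w (g + 1)) (w (g + 2)) := by
    simp (disch := omega) only [PatternAt, insertPair_of_le, insertPair_of_mem_Ioc,
      insertPair_of_lt, Nat.add_sub_cancel, show g + 2 + 1 - 2 = g + 1 by omega,
      show g + 3 + 1 - 2 = g + 2 by omega, and_self]
  simp only [patternCount, card_filter]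
  rw [sum_range_add _ (g + 4), sum_range_add _ (g + 2), sum_range_succ, sum_range_succ,
    sum_range_succ, sum_range_succ, sum_range_succ, sum_range_succ,
    sum_congr rfl fun t ht => if_congr (hlow t ht) rfl rfl,
    sum_congr rfl fun k hk => if_congr (hhigh k hk) rfl rfl]
  obtain ⟨h₀, h₁, h₂, h₃⟩ := hwindow
  simp only [h₀, h₁, h₂, h₃]
  ring

variable {w : ℕ → ℕ} {m g : ℕ}

lemma patternCount_insertPair_lap (hw : ∀ s, w s < m) (r : ℕ) :
    patternCount lapPattern (insertPair w m g) (g + 4 + r) +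
        ((if PatternAt lapPattern w g then 1 else 0) +
          if PatternAt lapPattern w (g + 1) then 1 else 0) =
      patternCount lapPattern w (g + 2 + r) + 1 := by
  rw [patternCount_insertPair]
  simp [lapPattern, hw, (hw _).ne, (hw _).not_gt]

lemma patternCount_insertPair_dasc (hw : ∀ s, w s < m) (r : ℕ) :
    patternCount dascPattern (insertPair w m g) (g + 4 + r) +
        ((if PatternAt dascPattern w g then 1 else 0) +
          if PatternAt dascPattern w (g + 1) then 1 else 0) =
      patternCount dascPattern w (g + 2 + r) + if w (g - 1) < w g then 1 else 0 := by
  rw [patternCount_insertPair]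
  simp [dascPattern, hw, (hw _).not_gt]

lemma patternCount_insertPair_dp (hw : ∀ s, w s < m) (r : ℕ) :
    patternCount dpPattern (insertPair w m g) (g + 4 + r) +
        ((if PatternAt dpPattern w g then 1 else 0) +
          if PatternAt dpPattern w (g + 1) then 1 else 0) =
      patternCount dpPattern w (g + 2 + r) +
        if w (g + 1) = w (g + 2) ∧ 0 < w (g + 1) then 1 else 0 := by
  rw [patternCount_insertPair]
  simp [dpPattern, hw, (hw _).ne, (hw _).not_gt]

end Patterns

/-- Positions `t < 2n + 2` cover every window meeting the word, so inserting two letters shifts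
the range by exactly two. -/
def wordStat (n : ℕ) (w : ℕ → ℕ) : ℤ × ℤ × ℤ :=
  (patternCount lapPattern w (2 * n + 2), patternCount dascPattern w (2 * n + 2),
    patternCount dpPattern w (2 * n + 2))

/-- The change of `wordStat` when a plateau of a new largest letter is inserted after position
`g` (`IsStirlingWord.wordStat_insertPair`). -/
def gapShift (w : ℕ → ℕ) (g : ℕ) : ℤ × ℤ × ℤ :=
  if PatternAt lapPattern w g then (0, 1, 0)
  else if PatternAt lapPattern w (g + 1) then (0, 0, 1)
  else if PatternAt dascPattern w (g + 1) then (1, -1, 0)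
  else if PatternAt dpPattern w g then (1, 0, -1)
  else (1, 0, 0)

lemma patternAt_exclusive (w : ℕ → ℕ) (g : ℕ) :
    (PatternAt lapPattern w g → ¬ PatternAt lapPattern w (g + 1) ∧
      ¬ PatternAt dascPattern w (g + 1) ∧ ¬ PatternAt dpPattern w g) ∧
    (PatternAt lapPattern w (g + 1) →
      ¬ PatternAt dascPattern w (g + 1) ∧ ¬ PatternAt dpPattern w g) ∧
    (PatternAt dascPattern w (g + 1) → ¬ PatternAt dpPattern w g) := by
  simp only [PatternAt, lapPattern, dascPattern, dpPattern, Nat.add_sub_cancel]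
  omega

lemma gapShift_cases (w : ℕ → ℕ) (g : ℕ) :
    (PatternAt lapPattern w g ∧ ¬ PatternAt lapPattern w (g + 1) ∧
      ¬ PatternAt dascPattern w (g + 1) ∧ ¬ PatternAt dpPattern w g ∧ gapShift w g = (0, 1, 0)) ∨
    (¬ PatternAt lapPattern w g ∧ PatternAt lapPattern w (g + 1) ∧
      ¬ PatternAt dascPattern w (g + 1) ∧ ¬ PatternAt dpPattern w g ∧ gapShift w g = (0, 0, 1)) ∨
    (¬ PatternAt lapPattern w g ∧ ¬ PatternAt lapPattern w (g + 1) ∧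
      PatternAt dascPattern w (g + 1) ∧ ¬ PatternAt dpPattern w g ∧ gapShift w g = (1, -1, 0)) ∨
    (¬ PatternAt lapPattern w g ∧ ¬ PatternAt lapPattern w (g + 1) ∧
      ¬ PatternAt dascPattern w (g + 1) ∧ PatternAt dpPattern w g ∧ gapShift w g = (1, 0, -1)) ∨
    (¬ PatternAt lapPattern w g ∧ ¬ PatternAt lapPattern w (g + 1) ∧
      ¬ PatternAt dascPattern w (g + 1) ∧ ¬ PatternAt dpPattern w g ∧ gapShift w g = (1, 0, 0)) := by
  obtain ⟨e₁, e₂, e₃⟩ := patternAt_exclusive w g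
  by_cases h₁ : PatternAt lapPattern w g
  · exact Or.inl ⟨h₁, (e₁ h₁).1, (e₁ h₁).2.1, (e₁ h₁).2.2, if_pos h₁⟩
  by_cases h₂ : PatternAt lapPattern w (g + 1)
  · exact Or.inr <| Or.inl ⟨h₁, h₂, (e₂ h₂).1, (e₂ h₂).2, by simp [gapShift, h₁, h₂]⟩
  by_cases h₃ : PatternAt dascPattern w (g + 1)
  · exact Or.inr <| Or.inr <| Or.inl ⟨h₁, h₂, h₃, e₃ h₃, by simp [gapShift, h₁, h₂, h₃]⟩
  by_cases h₄ : PatternAt dpPattern w g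
  · exact Or.inr <| Or.inr <| Or.inr <| Or.inl ⟨h₁, h₂, h₃, h₄, by simp [gapShift, h₁, h₂, h₃, h₄]⟩
  · exact Or.inr <| Or.inr <| Or.inr <| Or.inr ⟨h₁, h₂, h₃, h₄, by simp [gapShift, h₁, h₂, h₃, h₄]⟩

namespace IsStirlingWord

variable {n g : ℕ} {w : ℕ → ℕ}

lemma ite_ascent_eq (hw : IsStirlingWord n w) (t : ℕ) :
    (if w (t - 1) < w t then 1 else 0) =
      (if PatternAt dascPattern w t then 1 else 0) + if PatternAt lapPattern w t then 1 else 0 := by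
  have := hw.not_peak t
  split_ifs <;> simp only [PatternAt, lapPattern, dascPattern] at * <;> omega

lemma ite_plateau_eq (hw : IsStirlingWord n w) (t : ℕ) :
    (if w (t + 1) = w (t + 2) ∧ 0 < w (t + 1) then 1 else 0) =
      (if PatternAt dpPattern w (t + 1) then 1 else 0) +
        if PatternAt lapPattern w (t + 1) then 1 else 0 := by
  have := hw.not_triple (t := t)
  split_ifs <;> simp only [PatternAt, lapPattern, dpPattern, Nat.add_sub_cancel,
    show t + 1 + 1 = t + 2 from rfl] at * <;> omega

lemma wordStat_insertPair (hw : IsStirlingWord n w) (hg : g ≤ 2 * n) :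
    wordStat (n + 1) (insertPair w (n + 1) g) = wordStat n w + gapShift w g := by
  have hlap := patternCount_insertPair_lap (g := g) hw.lt_succ (2 * n - g)
  have hdasc := patternCount_insertPair_dasc (g := g) hw.lt_succ (2 * n - g)
  have hdp := patternCount_insertPair_dp (g := g) hw.lt_succ (2 * n - g)
  rw [hw.ite_ascent_eq] at hdasc
  rw [hw.ite_plateau_eq] at hdp
  rw [show g + 4 + (2 * n - g) = 2 * (n + 1) + 2 by omega,
    show g + 2 + (2 * n - g) = 2 * n + 2 by omega] at hlap hdasc hdp
  rcases gapShift_cases w g with ⟨h₁, h₂, h₃, h₄, hs⟩ | ⟨h₁, h₂, h₃, h₄, hs⟩ |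
    ⟨h₁, h₂, h₃, h₄, hs⟩ | ⟨h₁, h₂, h₃, h₄, hs⟩ | ⟨h₁, h₂, h₃, h₄, hs⟩ <;>
  simp only [h₁, h₂, h₃, h₄, if_true, if_false] at hlap hdasc hdp <;>
  simp only [wordStat, hs, Prod.mk_add_mk, Prod.mk.injEq] <;> omega

section Counting

variable {p : ℕ → ℕ → ℕ → Prop} [∀ a b c, Decidable (p a b c)]

lemma patternCount_eq_card_Icc (hw : IsStirlingWord n w) (hp : ∀ a b c, p a b c → 0 < b ∧ 0 < c) :
    patternCount p w (2 * n + 2) = #{t ∈ Icc 1 (2 * n - 1) | PatternAt p w t} := by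
  refine congrArg card (ext fun t => ?_)
  simp only [mem_filter, mem_range, mem_Icc]
  constructor
  · rintro ⟨-, h⟩
    have := hp _ _ _ h
    have := hw.eq_zero_iff t
    have := hw.eq_zero_iff (t + 1)
    exact ⟨⟨by omega, by omega⟩, h⟩
  · rintro ⟨⟨-, ht⟩, h⟩
    exact ⟨by omega, h⟩

lemma card_filter_patternAt (hw : IsStirlingWord n w) (hp : ∀ a b c, p a b c → 0 < b ∧ 0 < c) :
    #{g ∈ range (2 * n + 1) | PatternAt p w g} = patternCount p w (2 * n + 2) := by
  have hlast : ¬ PatternAt p w (2 * n + 1) :=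
    fun h => (hp _ _ _ h).2.ne' ((hw.eq_zero_iff _).mpr (Or.inr (by omega)))
  rw [patternCount, show 2 * n + 2 = 2 * n + 1 + 1 from rfl, range_add_one (n := 2 * n + 1),
    filter_insert, if_neg hlast]

lemma card_filter_patternAt_succ (hw : IsStirlingWord n w)
    (hp : ∀ a b c, p a b c → 0 < b ∧ 0 < c) :
    #{g ∈ range (2 * n + 1) | PatternAt p w (g + 1)} = patternCount p w (2 * n + 2) := by
  have hfirst : ¬ PatternAt p w 0 := fun h => (hp _ _ _ h).1.ne' ((hw.eq_zero_iff 0).mpr (Or.inl rfl))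
  rw [patternCount, card_filter, card_filter, sum_range_succ' _ (2 * n + 1), if_neg hfirst, add_zero]

end Counting

end IsStirlingWord

lemma wordStat_sval {n : ℕ} {σ : Fin (2 * n) → Fin (n + 1)} (hσ : σ ∈ StirlingSet n) :
    wordStat n (sval σ) = ((lapQ σ : ℤ), (dascQ σ : ℤ), (dpQ σ : ℤ)) := by
  have hw := isStirlingWord_sval_iff.mpr hσ
  have hdp : dpQ σ = #{t ∈ Icc 1 (2 * n - 1) | PatternAt dpPattern (sval σ) t} := by
    refine congrArg card (ext fun t => ?_)
    rw [mem_filter, mem_filter, mem_Icc, mem_Icc, PatternAt, dpPattern]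
    have := hw.eq_zero_iff (t - 1)
    have := hw.eq_zero_iff t
    omega
  rw [wordStat, hw.patternCount_eq_card_Icc fun _ _ _ => lapPattern_pos,
    hw.patternCount_eq_card_Icc fun _ _ _ => dascPattern_pos,
    hw.patternCount_eq_card_Icc fun _ _ _ => dpPattern_pos, hdp]
  rfl

lemma Pnum_eq_card (n : ℕ) (i j k : ℤ) :
    Pnum n i j k = #{w ∈ stirlingWords n | wordStat n w = (i, j, k)} := by
  unfold Pnum stirlingWords
  rw [filter_map, card_map]
  split_ifs with h
  · congr 2
    ext σ
    simp only [mem_filter, Function.comp_apply, Function.Embedding.coeFn_mk]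
    constructor <;> rintro ⟨hσ, hstat⟩ <;> refine ⟨hσ, ?_⟩ <;>
      simpa [wordStat_sval hσ] using hstat
  · rw [eq_comm, Nat.cast_eq_zero, card_eq_zero, filter_eq_empty_iff]
    intro σ hσ hstat
    simp only [Function.comp_apply, Function.Embedding.coeFn_mk, wordStat_sval hσ,
      Prod.mk.injEq] at hstat
    omega

namespace IsStirlingWord

variable {n g : ℕ} {w : ℕ → ℕ}

lemma ite_wordStat_insertPair (hw : IsStirlingWord n w) (hg : g ≤ 2 * n) (v : ℤ × ℤ × ℤ) :
    (if wordStat (n + 1) (insertPair w (n + 1) g) = v then 1 else 0 : ℤ) =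
      (if PatternAt lapPattern w g then 1 else 0) *
          (if wordStat n w + (0, 1, 0) = v then 1 else 0) +
        (if PatternAt lapPattern w (g + 1) then 1 else 0) *
          (if wordStat n w + (0, 0, 1) = v then 1 else 0) +
        (if PatternAt dascPattern w (g + 1) then 1 else 0) *
          (if wordStat n w + (1, -1, 0) = v then 1 else 0) +
        (if PatternAt dpPattern w g then 1 else 0) *
          (if wordStat n w + (1, 0, -1) = v then 1 else 0) +
        (1 - (if PatternAt lapPattern w g then 1 else 0) -
            (if PatternAt lapPattern w (g + 1) then 1 else 0) -
            (if PatternAt dascPattern w (g + 1) then 1 else 0) -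
            (if PatternAt dpPattern w g then 1 else 0)) *
          (if wordStat n w + (1, 0, 0) = v then 1 else 0) := by
  rw [hw.wordStat_insertPair hg]
  rcases gapShift_cases w g with ⟨h₁, h₂, h₃, h₄, hs⟩ | ⟨h₁, h₂, h₃, h₄, hs⟩ |
    ⟨h₁, h₂, h₃, h₄, hs⟩ | ⟨h₁, h₂, h₃, h₄, hs⟩ | ⟨h₁, h₂, h₃, h₄, hs⟩ <;>
  simp [h₁, h₂, h₃, h₄, hs]

lemma card_filter_wordStat_insertPair (hw : IsStirlingWord n w) (i j k : ℤ) :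
    (#{g ∈ range (2 * n + 1) | wordStat (n + 1) (insertPair w (n + 1) g) = (i, j, k)} : ℤ) =
      i * (if wordStat n w = (i, j - 1, k) then 1 else 0) +
        i * (if wordStat n w = (i, j, k - 1) then 1 else 0) +
        (j + 1) * (if wordStat n w = (i - 1, j + 1, k) then 1 else 0) +
        (k + 1) * (if wordStat n w = (i - 1, j, k + 1) then 1 else 0) +
        (2 * n + 3 - 2 * i - j - k) * (if wordStat n w = (i - 1, j, k) then 1 else 0) := by
  rw [natCast_card_filter, sum_congr rfl fun g hg =>
    hw.ite_wordStat_insertPair (by rw [mem_range] at hg; omega) _]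
  simp only [sum_add_distrib, sum_sub_distrib, ← sum_mul, sum_boole, sum_const, card_range, nsmul_one,
    hw.card_filter_patternAt (p := lapPattern) fun _ _ _ => lapPattern_pos,
    hw.card_filter_patternAt_succ (p := lapPattern) fun _ _ _ => lapPattern_pos,
    hw.card_filter_patternAt_succ (p := dascPattern) fun _ _ _ => dascPattern_pos,
    hw.card_filter_patternAt (p := dpPattern) fun _ _ _ => dpPattern_pos]
  rw [mul_ite_add_eq (c' := i) fun h => ?_, mul_ite_add_eq (c' := i) fun h => ?_,
    mul_ite_add_eq (c' := j + 1) fun h => ?_, mul_ite_add_eq (c' := k + 1) fun h => ?_,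
    mul_ite_add_eq (c' := 2 * n + 3 - 2 * i - j - k) fun h => ?_]
  · simp only [Prod.mk_sub_mk, sub_zero, sub_neg_eq_add]
  all_goals
    simp only [wordStat, Prod.mk_sub_mk, Prod.mk.injEq] at h
    push_cast
    omega

end IsStirlingWord

theorem statement_12_general (n : ℕ) (i j k : ℤ) :
    Pnum (n + 1) i j k =
      i * Pnum n i (j - 1) k + i * Pnum n i j (k - 1) +
        (j + 1) * Pnum n (i - 1) (j + 1) k + (k + 1) * Pnum n (i - 1) j (k + 1) +
        (2 * (n : ℤ) + 3 - 2 * i - j - k) * Pnum n (i - 1) j k := by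
  simp only [Pnum_eq_card, card_filter_stirlingWords_succ, Nat.cast_sum]
  rw [sum_congr rfl fun w hw => (mem_stirlingWords.mp hw).card_filter_wordStat_insertPair i j k]
  simp only [sum_add_distrib, ← mul_sum, sum_boole]

theorem statement_12 (n : ℕ) (i j k : ℤ) (hi : 0 ≤ i) (hj : 0 ≤ j) (hk : 0 ≤ k) :
    Pnum (n + 1) i j k =
      i * Pnum n i (j - 1) k + i * Pnum n i j (k - 1) +
        (j + 1) * Pnum n (i - 1) (j + 1) k + (k + 1) * Pnum n (i - 1) j (k + 1) +
        (2 * (n : ℤ) + 3 - 2 * i - j - k) * Pnum n (i - 1) j k :=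
  statement_12_general n i j k
end
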